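/- arXiv:2310.12621 — 14 statements merged into one kernel-verified Lean document; each statement's English description precedes it below -/
import Mathlib

section
/- Let (R_k)_{k∈S} be a family of commutative rings and R = ∏_{k∈S} R_k their direct product. Then the total ring of fractions T(R) is canonically isomorphic to ∏_{k∈S} T(R_k). -/
open nonZeroDivisors

section

variable {ι : Type*} {M₀ : ι → Type*} [∀ i, MonoidWithZero (M₀ i)]

theorem Pi.mem_nonZeroDivisors_iff {x : ∀ i, M₀ i} :
    x ∈ (∀ i, M₀ i)⁰ ↔ ∀ i, x i ∈ (M₀ i)⁰ := by
  classical
  refine ⟨fun hx i => ⟨fun y hy => ?_, fun y hy => ?_⟩,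
    fun hx => ⟨fun y hy => ?_, fun y hy => ?_⟩⟩
  -- a zero divisor of `x i` becomes one of `x` when placed in the `i`-th coordinate
  · have := hx.1 (Pi.single i y) (by rw [← Pi.single_mul_right, hy, Pi.single_zero])
    simpa using congrFun this i
  · have := hx.2 (Pi.single i y) (by rw [← Pi.single_mul_left, hy, Pi.single_zero])
    simpa using congrFun this i
  · exact funext fun i => (hx i).1 (y i) (congrFun hy i)
  · exact funext fun i => (hx i).2 (y i) (congrFun hy i)

theorem Pi.nonZeroDivisors_eq_pi :
    (∀ i, M₀ i)⁰ = Submonoid.pi Set.univ fun i => (M₀ i)⁰ := by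
  ext x
  simp [Pi.mem_nonZeroDivisors_iff, Submonoid.mem_pi]

end

instance Pi.isFractionRing {ι : Type*} (R K : ι → Type*) [∀ i, CommSemiring (R i)]
    [∀ i, CommSemiring (K i)] [∀ i, Algebra (R i) (K i)] [∀ i, IsFractionRing (R i) (K i)] :
    IsFractionRing (∀ i, R i) (∀ i, K i) := by
  rw [IsFractionRing, Pi.nonZeroDivisors_eq_pi]
  infer_instance

/-- For a direct product `R = ∏_{k∈S} R_k` of commutative rings, the total ring of
fractions `T(R)` is canonically isomorphic to `∏_{k∈S} T(R_k)`; the isomorphism is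
compatible with the canonical maps from the rings to their total rings of fractions. -/
theorem stmt_1 {S : Type*} (R : S → Type*) [∀ k, CommRing (R k)] :
    ∃ e : FractionRing (∀ k, R k) ≃+* (∀ k, FractionRing (R k)),
      ∀ x : ∀ k, R k,
        e (algebraMap (∀ k, R k) (FractionRing (∀ k, R k)) x) =
          fun k => algebraMap (R k) (FractionRing (R k)) (x k) :=
  ⟨(IsLocalization.algEquiv (∀ k, R k)⁰ _ _).toRingEquiv,
    (IsLocalization.algEquiv (∀ k, R k)⁰ _ (∀ k, FractionRing (R k))).commutes⟩
end

section
/- Let (R_k)_{k∈S} be a family of nonzero commutative rings and R = ∏_{k∈S} R_k. The nilradical of R equals the product ∏_{k∈S} 𝔑(R_k) of the nilradicals if and only if the set of minimal tame primes of R is dense in Spec(R) with respect to the Zariski topology. -/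
/-!
A set of primes is dense in `Spec R` iff its vanishing ideal lies in the nilradical. Since the
nilradical of `R_k` is the intersection of its minimal primes, the vanishing ideal of the minimal
tame primes is `∏ 𝔑(R_k)`, so density says exactly `∏ 𝔑(R_k) ⊆ 𝔑(R)`; the reverse inclusion
always holds.
-/

namespace PrimeSpectrum

variable {A B : Type*} [CommRing A] [CommRing B]

theorem dense_iff_vanishingIdeal_le_nilradical {s : Set (PrimeSpectrum A)} :
    Dense s ↔ vanishingIdeal s ≤ nilradical A := by
  rw [dense_iff_closure_eq, ← zeroLocus_vanishingIdeal_eq_closure, zeroLocus_eq_univ_iff]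
  rfl

theorem vanishingIdeal_comap_minimalPrimes (f : A →+* B) :
    vanishingIdeal {P : PrimeSpectrum A | ∃ 𝔭 : Ideal B, 𝔭 ∈ minimalPrimes B ∧
      P.asIdeal = 𝔭.comap f} = (nilradical B).comap f := by
  ext a
  rw [mem_vanishingIdeal, Ideal.mem_comap, nilradical, ← Ideal.sInf_minimalPrimes,
    Submodule.mem_sInf]
  constructor
  · intro h 𝔭 h𝔭
    have : Ideal.IsPrime 𝔭 := h𝔭.1.1
    exact h ⟨Ideal.comap f 𝔭, Ideal.comap_isPrime f 𝔭⟩ ⟨𝔭, h𝔭, rfl⟩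
  · rintro h P ⟨𝔭, h𝔭, hP⟩
    rw [hP]
    exact h 𝔭 h𝔭

end PrimeSpectrum

theorem Pi.mem_iInf_comap_nilradical_iff {S : Type*} {R : S → Type*} [∀ k, CommRing (R k)]
    {a : ∀ k, R k} :
    a ∈ ⨅ k, (nilradical (R k)).comap (Pi.evalRingHom R k) ↔ ∀ k, IsNilpotent (a k) := by
  simp only [Ideal.mem_iInf, Ideal.mem_comap, Pi.evalRingHom_apply, mem_nilradical]

open PrimeSpectrum in
theorem stmt_3_general {S : Type*} (R : S → Type*) [∀ k, CommRing (R k)] :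
    (∀ a : ∀ k, R k, IsNilpotent a ↔ ∀ k, IsNilpotent (a k)) ↔
      Dense {P : PrimeSpectrum (∀ k, R k) |
        ∃ (k : S) (𝔭 : Ideal (R k)), 𝔭 ∈ minimalPrimes (R k) ∧
          P.asIdeal = 𝔭.comap (Pi.evalRingHom R k)} := by
  rw [Set.ofPred_exists, dense_iff_vanishingIdeal_le_nilradical, vanishingIdeal_iUnion]
  simp only [vanishingIdeal_comap_minimalPrimes]
  constructor
  · intro h a ha
    exact (h a).mpr (Pi.mem_iInf_comap_nilradical_iff.mp ha)
  · intro h a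
    exact ⟨fun ha k => ha.map (Pi.evalRingHom R k),
      fun ha => h (Pi.mem_iInf_comap_nilradical_iff.mpr ha)⟩

/-- For a family of nonzero commutative rings `(R_k)` and `R = ∏ R_k`, the nilradical of
`R` equals the product of the nilradicals `∏ 𝔑(R_k)` if and only if the set of minimal
tame primes of `R` (primes of the form `π_k⁻¹(𝔭)` with `𝔭` a minimal prime of `R_k`)
is dense in `Spec R` with respect to the Zariski topology. -/
theorem stmt_3 {S : Type*} (R : S → Type*) [∀ k, CommRing (R k)] [∀ k, Nontrivial (R k)] :
    (∀ a : ∀ k, R k, IsNilpotent a ↔ ∀ k, IsNilpotent (a k)) ↔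
      Dense {P : PrimeSpectrum (∀ k, R k) |
        ∃ (k : S) (𝔭 : Ideal (R k)), 𝔭 ∈ minimalPrimes (R k) ∧
          P.asIdeal = 𝔭.comap (Pi.evalRingHom R k)} :=
  stmt_3_general R
end

section
/- Let R be a commutative ring, E ⊆ Spec(R), and π : R → ∏_{𝔭∈E} κ(𝔭) the canonical ring homomorphism into the product of residue fields. Then the image of the induced map π* : Spec(∏_{𝔭∈E} κ(𝔭)) → Spec(R) equals the closure of E in the patch (constructible) topology on Spec(R). -/
/-- The patch (constructible) topology on `Spec R`: the sets `V(a)` and `D(a)`, `a ∈ R`,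
form a subbasis of opens. -/
def patchTopology (R : Type*) [CommRing R] : TopologicalSpace (PrimeSpectrum R) :=
  TopologicalSpace.generateFrom
    ({U | ∃ a : R, U = PrimeSpectrum.zeroLocus {a}} ∪
      {U | ∃ a : R, U = (PrimeSpectrum.zeroLocus {a})ᶜ})

/-- Residue field of `R` at a prime `𝔭`. -/
noncomputable abbrev residueFieldAt {R : Type*} [CommRing R] (p : PrimeSpectrum R) :=
  IsLocalRing.ResidueField (Localization.AtPrime p.asIdeal)

/-!
Prime ideals of a product `∏ᵢ Kᵢ` of fields are exactly the ideals
`{x | xᵢ = 0 for U-almost all i}` for ultrafilters `U` on the index set: given a prime `P`, any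
ultrafilter containing the supports of the elements outside `P` works, because
`x ∈ P ↔ 1 - x x⁻¹ ∉ P` and `1 - x x⁻¹` is supported on the zero set of `x`. Hence `π*` hits
exactly the primes `q` with `a ∈ q ↔ a ∈ 𝔭 for U-almost all 𝔭 ∈ E`, for some ultrafilter `U`
on `E`. Since the subbasic patch-opens `V(a)` and `D(a)` are complementary, this condition says
precisely that `U` converges to `q` in the patch topology, and the points of the closure of `E`
are the limits of ultrafilters on `E`.
-/

open Filter Topology Set

theorem mem_closure_range_iff_exists_ultrafilter {X ι : Type*} [TopologicalSpace X]
    {f : ι → X} {x : X} : x ∈ closure (range f) ↔ ∃ U : Ultrafilter ι, Tendsto f U (𝓝 x) := by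
  rw [mem_closure_iff_clusterPt, ← map_top, ← MapClusterPt, mapClusterPt_iff_ultrafilter]
  simp

namespace Pi

variable {ι : Type*} {K : ι → Type*}

def idealOfUltrafilter [∀ i, Semiring (K i)] (U : Ultrafilter ι) : Ideal (∀ i, K i) where
  carrier := {x | ∀ᶠ i in U, x i = 0}
  add_mem' hx hy := (hx.and hy).mono fun i h => by simp [h.1, h.2]
  zero_mem' := univ_mem' fun _ => rfl
  smul_mem' c x hx := hx.mono fun i h => by simp [h]

instance isPrime_idealOfUltrafilter [∀ i, Semiring (K i)] [∀ i, IsDomain (K i)]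
    (U : Ultrafilter ι) : (idealOfUltrafilter (K := K) U).IsPrime where
  ne_top' h := by
    obtain ⟨i, hi⟩ := ((Ideal.eq_top_iff_one _).1 h : ∀ᶠ i in U, (1 : ∀ i, K i) i = 0).exists
    exact one_ne_zero hi
  mem_or_mem' hxy := Ultrafilter.eventually_or.1 <| hxy.mono fun _ h => mul_eq_zero.1 h

theorem exists_eq_idealOfUltrafilter [∀ i, Field (K i)] (P : Ideal (∀ i, K i)) [hP : P.IsPrime] :
    ∃ U : Ultrafilter ι, P = idealOfUltrafilter U := by
  have one_notMem : (1 : ∀ i, K i) ∉ P := (P.ne_top_iff_one).1 hP.ne_top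
  let F : Filter ι :=
    { sets := {A | ∃ x ∉ P, ∀ i, x i ≠ 0 → i ∈ A}
      univ_sets := ⟨1, one_notMem, fun _ _ => trivial⟩
      sets_of_superset := fun ⟨x, hx, hA⟩ hAB => ⟨x, hx, fun i hi => hAB (hA i hi)⟩
      inter_sets := fun ⟨x, hx, hA⟩ ⟨y, hy, hB⟩ =>
        ⟨x * y, fun h => (hP.mem_or_mem h).elim hx hy,
          fun i hi => ⟨hA i (left_ne_zero_of_mul hi), hB i (right_ne_zero_of_mul hi)⟩⟩ }
  have : F.NeBot := forall_mem_nonempty_iff_neBot.1 fun A ⟨x, hx, hA⟩ => by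
    obtain ⟨i, hi⟩ := Function.ne_iff.1 (ne_of_mem_of_not_mem P.zero_mem hx).symm
    exact ⟨i, hA i hi⟩
  let U := Ultrafilter.of F
  have support_mem (x) (hx : x ∉ P) : ∀ᶠ i in U, x i ≠ 0 :=
    Ultrafilter.of_le F ⟨x, hx, fun _ => id⟩
  refine ⟨U, Ideal.ext fun x => ⟨fun hx => ?_, fun hx => ?_⟩⟩
  · have h1 : 1 - x * x⁻¹ ∉ P := fun h =>
      one_notMem (by simpa using P.add_mem h (P.mul_mem_right x⁻¹ hx))
    refine (support_mem _ h1).mono fun i hi => ?_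
    by_contra h
    simp [h] at hi
  · by_contra h
    obtain ⟨i, hi, hi'⟩ := (hx.and (support_mem x h)).exists
    exact hi' hi

end Pi

namespace PrimeSpectrum

variable {R ι : Type*} [CommRing R]

theorem tendsto_nhds_patchTopology_iff {f : ι → PrimeSpectrum R} {U : Ultrafilter ι}
    {q : PrimeSpectrum R} :
    Tendsto f U (@nhds _ (patchTopology R) q) ↔
      ∀ a : R, a ∈ q.asIdeal ↔ ∀ᶠ i in U, a ∈ (f i).asIdeal := by
  rw [patchTopology, TopologicalSpace.tendsto_nhds_generateFrom_iff]
  simp only [mem_union, or_imp, forall_and, mem_ofPred_eq, forall_exists_index,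
    forall_eq_apply_imp_iff]
  rw [← forall_and]
  refine forall_congr' fun a => ?_
  have hV : f ⁻¹' zeroLocus {a} = {i | a ∈ (f i).asIdeal} := by ext; simp
  rw [preimage_compl, hV, Ultrafilter.mem_coe, Ultrafilter.mem_coe,
    Ultrafilter.compl_mem_iff_notMem]
  simp only [mem_compl_iff, mem_zeroLocus, singleton_subset_iff, SetLike.mem_coe, not_imp_not]
  exact iff_iff_implies_and_implies.symm

theorem mem_closure_patchTopology_range_iff {f : ι → PrimeSpectrum R} {q : PrimeSpectrum R} :
    q ∈ closure[patchTopology R] (range f) ↔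
      ∃ U : Ultrafilter ι, ∀ a : R, a ∈ q.asIdeal ↔ ∀ᶠ i in U, a ∈ (f i).asIdeal := by
  let := patchTopology R
  simp only [mem_closure_range_iff_exists_ultrafilter, tendsto_nhds_patchTopology_iff]

theorem range_comap_pi {K : ι → Type*} [∀ i, Field (K i)] (φ : ∀ i, R →+* K i) :
    range (comap (RingHom.pi φ)) =
      {q | ∃ U : Ultrafilter ι, ∀ a : R, a ∈ q.asIdeal ↔ ∀ᶠ i in U, φ i a = 0} := by
  ext q
  constructor
  · rintro ⟨P, rfl⟩
    obtain ⟨U, hU⟩ := Pi.exists_eq_idealOfUltrafilter P.asIdeal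
    exact ⟨U, fun a => by rw [comap_asIdeal, Ideal.mem_comap, hU]; rfl⟩
  · rintro ⟨U, hU⟩
    exact ⟨⟨Pi.idealOfUltrafilter U, inferInstance⟩, PrimeSpectrum.ext <| Ideal.ext fun a => (hU a).symm⟩

end PrimeSpectrum

/-- For `E ⊆ Spec R` and the canonical map `π : R → ∏_{𝔭∈E} κ(𝔭)`, the image of the
induced map `π* : Spec (∏_{𝔭∈E} κ(𝔭)) → Spec R` equals the closure of `E` in the patch
(constructible) topology. -/
theorem stmt_5 {R : Type*} [CommRing R] (E : Set (PrimeSpectrum R)) :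
    Set.range
        (PrimeSpectrum.comap
          (Pi.ringHom fun p : E => algebraMap R (residueFieldAt (p : PrimeSpectrum R)))) =
      @closure _ (patchTopology R) E := by
  refine (PrimeSpectrum.range_comap_pi _).trans (Set.ext fun q => ?_)
  have hE := PrimeSpectrum.mem_closure_patchTopology_range_iff (f := ((↑) : E → _)) (q := q)
  rw [Subtype.range_coe] at hE
  simp only [hE, mem_ofPred_eq, Ideal.algebraMap_residueField_eq_zero]
end

section
/- Let R be a commutative ring, E ⊆ Spec(R), and π : R → ∏_{𝔭∈E} R/𝔭 the canonical ring homomorphism. Then for every prime ideal P of ∏_{𝔭∈E} R/𝔭, the contraction π⁻¹(P) lies in the Zariski closure of E in Spec(R). -/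
namespace PrimeSpectrum

variable {R : Type*} [CommRing R] (E : Set (PrimeSpectrum R))

lemma ker_piQuotientMk_eq_vanishingIdeal :
    RingHom.ker (RingHom.pi fun p : E => Ideal.Quotient.mk (p : PrimeSpectrum R).asIdeal) =
      vanishingIdeal E := by
  ext r
  simp [Ideal.ker_Pi_Quotient_mk, mem_vanishingIdeal]

lemma closure_range_comap_piQuotientMk :
    closure (Set.range
      (comap (RingHom.pi fun p : E => Ideal.Quotient.mk (p : PrimeSpectrum R).asIdeal))) =
      closure E := by
  rw [closure_range_comap, ker_piQuotientMk_eq_vanishingIdeal, zeroLocus_vanishingIdeal_eq_closure]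

end PrimeSpectrum

/-- Let `R` be a commutative ring, `E ⊆ Spec R`, and `π : R → ∏_{𝔭∈E} R/𝔭` the canonical
map. Then for every prime ideal `P` of `∏_{𝔭∈E} R/𝔭`, the contraction `π⁻¹(P)` lies in
the Zariski closure of `E` in `Spec R`. -/
theorem stmt_6 {R : Type*} [CommRing R] (E : Set (PrimeSpectrum R)) :
    ∀ P : PrimeSpectrum (∀ p : E, R ⧸ (p : PrimeSpectrum R).asIdeal),
      PrimeSpectrum.comap
          (Pi.ringHom fun p : E => Ideal.Quotient.mk (p : PrimeSpectrum R).asIdeal) P ∈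
        closure E := by
  intro P
  rw [← PrimeSpectrum.closure_range_comap_piQuotientMk E]
  exact subset_closure (Set.mem_range_self P)
end

section
/- Let R be a commutative ring, E ⊆ Spec(R), and π : R → ∏_{𝔭∈E} R_𝔭 the canonical ring homomorphism into the product of localizations. Then for every prime ideal P of ∏_{𝔭∈E} R_𝔭, the contraction π⁻¹(P) lies in the closure of E in the flat (inverse) topology on Spec(R). -/
/-- The flat (inverse) topology on `Spec R`: the sets `V(a)`, `a ∈ R`, form a subbasis
of opens. -/
def flatTopology (R : Type*) [CommRing R] : TopologicalSpace (PrimeSpectrum R) :=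
  TopologicalSpace.generateFrom {U | ∃ a : R, U = PrimeSpectrum.zeroLocus {a}}

/-- Let `R` be a commutative ring, `E ⊆ Spec R`, and `π : R → ∏_{𝔭∈E} R_𝔭` the canonical
map into the product of localizations. Then for every prime ideal `P` of `∏_{𝔭∈E} R_𝔭`,
the contraction `π⁻¹(P)` lies in the closure of `E` in the flat topology. -/
theorem stmt_7 {R : Type*} [CommRing R] (E : Set (PrimeSpectrum R)) :
    ∀ P : PrimeSpectrum (∀ p : E, Localization.AtPrime (p : PrimeSpectrum R).asIdeal),
      PrimeSpectrum.comap
          (Pi.ringHom fun p : E =>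
            algebraMap R (Localization.AtPrime (p : PrimeSpectrum R).asIdeal)) P ∈
        @closure _ (flatTopology R) E := by
  intro P
  letI := flatTopology R
  set π : R →+* ∀ p : E, Localization.AtPrime (p : PrimeSpectrum R).asIdeal :=
    Pi.ringHom fun p : E =>
      algebraMap R (Localization.AtPrime (p : PrimeSpectrum R).asIdeal) with hπ
  have hbasis := TopologicalSpace.isTopologicalBasis_of_subbasis
    (s := {U | ∃ a : R, U = PrimeSpectrum.zeroLocus {a}}) (t := flatTopology R) rfl
  rw [hbasis.mem_closure_iff]
  rintro o ⟨f, ⟨hf_fin, hf_sub⟩, rfl⟩ hx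
  -- choose a generator for each element of f
  classical
  set g : Set (PrimeSpectrum R) → R := fun V =>
    if h : ∃ a : R, V = PrimeSpectrum.zeroLocus {a} then h.choose else 0 with hg
  have hgf : ∀ V ∈ f, V = PrimeSpectrum.zeroLocus {g V} := by
    intro V hV
    obtain ⟨a, ha⟩ := hf_sub hV
    have h : ∃ a : R, V = PrimeSpectrum.zeroLocus {a} := ⟨a, ha⟩
    simp only [hg]
    rw [dif_pos h]
    exact h.choose_spec
  -- membership of the contraction in all V(g V)
  have hx' : ∀ V ∈ f, π (g V) ∈ P.asIdeal := by
    intro V hV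
    have := hx V hV
    rw [hgf V hV] at this
    exact (PrimeSpectrum.mem_zeroLocus _ _).mp this (Set.mem_singleton _)
  by_contra hne
  -- for every p ∈ E there is V ∈ f with g V ∉ p
  have hch : ∀ p : E, ∃ V, V ∈ f ∧ g V ∉ (p : PrimeSpectrum R).asIdeal := by
    intro p
    by_contra hc
    push_neg at hc
    refine hne ⟨(p : PrimeSpectrum R), ?_, p.2⟩
    intro V hV
    rw [hgf V hV]
    rw [PrimeSpectrum.mem_zeroLocus, Set.singleton_subset_iff]
    exact hc V hV
  choose σ hσf hσ using hch
  -- the inverse units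
  have hu : ∀ p : E, IsUnit
      (algebraMap R (Localization.AtPrime (p : PrimeSpectrum R).asIdeal) (g (σ p))) := fun p =>
    IsLocalization.map_units _ (⟨g (σ p), hσ p⟩ : (p : PrimeSpectrum R).asIdeal.primeCompl)
  set c : Set (PrimeSpectrum R) →
      ∀ p : E, Localization.AtPrime (p : PrimeSpectrum R).asIdeal := fun V p =>
    if σ p = V then ((hu p).unit⁻¹ : _) else 0 with hc
  set F : Finset (Set (PrimeSpectrum R)) := hf_fin.toFinset with hF
  have hsum : ∑ V ∈ F, π (g V) * c V = 1 := by
    funext p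
    rw [Finset.sum_apply]
    have : ∀ V ∈ F, (π (g V) * c V) p
        = if σ p = V then algebraMap R (Localization.AtPrime (p : PrimeSpectrum R).asIdeal) (g V)
            * ((hu p).unit⁻¹ : _) else 0 := by
      intro V _
      simp only [Pi.mul_apply, hc, mul_ite, mul_zero]
      rfl
    rw [Finset.sum_congr rfl this, Finset.sum_ite_eq,
      if_pos (hf_fin.mem_toFinset.mpr (hσf p))]
    rw [Pi.one_apply]
    exact (hu p).mul_val_inv
  have h1 : (1 : ∀ p : E, Localization.AtPrime (p : PrimeSpectrum R).asIdeal) ∈ P.asIdeal := by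
    rw [← hsum]
    exact Ideal.sum_mem _ fun V hV =>
      Ideal.mul_mem_right _ _ (hx' V (hf_fin.mem_toFinset.mp hV))
  exact P.isPrime.ne_top ((Ideal.eq_top_iff_one _).mpr h1)
end

section
/- For a commutative ring R, every infinite subset of Spec(R) is dense in the Zariski topology if and only if for every non-nilpotent element a ∈ R the set V(a) = {𝔭 ∈ Spec(R) : a ∈ 𝔭} is finite. -/
/-- For a commutative ring `R`, every infinite subset of `Spec R` is dense in the Zariski
topology if and only if `V(a)` is finite for every non-nilpotent `a ∈ R`. -/
theorem stmt_8 {R : Type*} [CommRing R] :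
    (∀ E : Set (PrimeSpectrum R), E.Infinite → Dense E) ↔
      ∀ a : R, ¬ IsNilpotent a → (PrimeSpectrum.zeroLocus {a}).Finite := by
  constructor
  · intro h a ha
    by_contra hfin
    have hd := h _ hfin
    have hcl : PrimeSpectrum.zeroLocus {a} = Set.univ := by
      have := hd.closure_eq
      rwa [(PrimeSpectrum.isClosed_zeroLocus {a}).closure_eq] at this
    apply ha
    rw [nilpotent_iff_mem_prime]
    intro J hJ
    have : (⟨J, hJ⟩ : PrimeSpectrum R) ∈ PrimeSpectrum.zeroLocus {a} := hcl ▸ Set.mem_univ _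
    simpa [PrimeSpectrum.mem_zeroLocus] using this
  · intro h E hE
    rw [dense_iff_closure_eq, ← PrimeSpectrum.zeroLocus_vanishingIdeal_eq_closure]
    by_contra hne
    have : ∃ a ∈ PrimeSpectrum.vanishingIdeal E, ¬ IsNilpotent a := by
      by_contra hall
      push_neg at hall
      apply hne
      ext p
      simp only [Set.mem_univ, iff_true, PrimeSpectrum.mem_zeroLocus]
      intro a haE
      exact (nilpotent_iff_mem_prime.mp (hall a haE)) p.asIdeal p.isPrime
    obtain ⟨a, haE, hna⟩ := this
    have hsub : E ⊆ PrimeSpectrum.zeroLocus {a} := by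
      intro p hp
      rw [PrimeSpectrum.mem_zeroLocus, Set.singleton_subset_iff]
      exact (PrimeSpectrum.mem_vanishingIdeal E a).mp haE p hp
    exact hE ((h a hna).subset hsub)
end

section
/- For a commutative ring R, every infinite subset of Spec(R) is dense in the flat topology if and only if for every non-unit a ∈ R the set D(a) = {𝔭 ∈ Spec(R) : a ∉ 𝔭} is finite. -/
/-- For a commutative ring `R`, every infinite subset of `Spec R` is dense in the flat
topology if and only if `D(a)` is finite for every non-unit `a ∈ R`. -/
theorem stmt_9 {R : Type*} [CommRing R] :
    (∀ E : Set (PrimeSpectrum R), E.Infinite → @Dense _ (flatTopology R) E) ↔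
      ∀ a : R, ¬ IsUnit a → {p : PrimeSpectrum R | a ∉ p.asIdeal}.Finite := by
  letI := flatTopology R
  constructor
  · intro h a ha
    by_contra hinf
    rw [← Set.not_infinite, not_not] at hinf
    have hd := h _ hinf
    obtain ⟨m, hm, ham⟩ :=
      Ideal.exists_le_maximal (Ideal.span {a}) (Ideal.span_singleton_ne_top ha)
    have hopen : IsOpen (PrimeSpectrum.zeroLocus {a} : Set (PrimeSpectrum R)) :=
      TopologicalSpace.GenerateOpen.basic _ ⟨a, rfl⟩
    have hne : (PrimeSpectrum.zeroLocus {a} : Set (PrimeSpectrum R)).Nonempty :=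
      ⟨⟨m, hm.isPrime⟩, by
        simpa [PrimeSpectrum.mem_zeroLocus, Set.singleton_subset_iff] using
          ham (Ideal.mem_span_singleton_self a)⟩
    obtain ⟨p, hp1, hp2⟩ := hd.inter_open_nonempty _ hopen hne
    exact hp2 (by simpa [PrimeSpectrum.mem_zeroLocus, Set.singleton_subset_iff] using hp1)
  · intro h E hE
    have hbasis := TopologicalSpace.isTopologicalBasis_of_subbasis
      (rfl : flatTopology R = TopologicalSpace.generateFrom
        {U | ∃ a : R, U = PrimeSpectrum.zeroLocus {a}})
    rw [hbasis.dense_iff]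
    rintro U ⟨f, ⟨hf_fin, hf_sub⟩, rfl⟩ hne
    have hcfin : (⋂₀ f)ᶜ.Finite := by
      rw [Set.compl_sInter]
      apply Set.Finite.sUnion (hf_fin.image _)
      rintro t ⟨V, hV, rfl⟩
      obtain ⟨a, rfl⟩ := hf_sub hV
      have hnu : ¬ IsUnit a := by
        intro hu
        obtain ⟨p, hp⟩ := hne
        have := Set.mem_sInter.mp hp _ hV
        rw [PrimeSpectrum.mem_zeroLocus, Set.singleton_subset_iff] at this
        exact p.isPrime.ne_top (p.asIdeal.eq_top_of_isUnit_mem this hu)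
      have heq : (PrimeSpectrum.zeroLocus {a})ᶜ = {p : PrimeSpectrum R | a ∉ p.asIdeal} := by
        ext p; simp [PrimeSpectrum.mem_zeroLocus]
      rw [heq]
      exact h a hnu
    by_contra hc
    rw [Set.not_nonempty_iff_eq_empty] at hc
    have hsub : E ⊆ (⋂₀ f)ᶜ := fun x hx hx' =>
      Set.eq_empty_iff_forall_notMem.mp hc x ⟨hx', hx⟩
    exact hE (hcfin.subset hsub)
end

section
/- Let R be a Dedekind domain with torsion ideal class group and E an infinite set of maximal ideals of R. Let π : R → S := ∏_{𝔭∈E} R/𝔭 be the canonical map. Then Im π* = E ∪ {0}, and for every prime ideal P of S containing the direct sum ideal ⊕_{𝔭∈E} R/𝔭 one has π⁻¹(P) = 0. -/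
/-!
A prime `Q` of `S = ∏ R/𝔭` either misses some idempotent `e_𝔭 = Pi.single 𝔭 1`, and then
contains `1 - e_𝔭`, hence the kernel of the projection to `R/𝔭`, so that `π⁻¹(Q) = 𝔭`; or it
contains every `e_𝔭`, hence the whole direct sum ideal. In the second case a nonzero
`x ∈ π⁻¹(Q)` lies in only finitely many primes of the Dedekind domain `R`, so correcting `π x`
by the finitely supported element which is `1` exactly at those primes gives a unit of `S`
lying in `Q`, which is absurd. Primes of the second kind exist because the direct sum ideal is
proper when `E` is infinite.
-/

namespace Pi

variable {ι : Type*} {A : ι → Type*} [∀ i, CommRing (A i)]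

variable (A) in
def finiteSupportIdeal : Ideal (∀ i, A i) where
  carrier := {f | {i | f i ≠ 0}.Finite}
  zero_mem' := by simp
  add_mem' {f g} hf hg := (hf.union hg).subset fun i hi => by
    by_contra h
    simp_all
  smul_mem' c f hf := hf.subset fun i hi => by
    by_contra h
    simp_all

theorem mem_finiteSupportIdeal {f : ∀ i, A i} :
    f ∈ finiteSupportIdeal A ↔ {i | f i ≠ 0}.Finite :=
  Iff.rfl

theorem finiteSupportIdeal_ne_top [Infinite ι] [∀ i, Nontrivial (A i)] :
    finiteSupportIdeal A ≠ ⊤ := by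
  rw [Ne, Ideal.eq_top_iff_one, mem_finiteSupportIdeal]
  simpa using Set.infinite_univ

theorem finiteSupportIdeal_le_of_single_one_mem [DecidableEq ι] {I : Ideal (∀ i, A i)}
    (h : ∀ i, Pi.single i 1 ∈ I) : finiteSupportIdeal A ≤ I := by
  intro f hf
  rw [mem_finiteSupportIdeal] at hf
  have hsum : f = ∑ i ∈ hf.toFinset, f * Pi.single i 1 := by
    ext j
    simp only [← Pi.single_mul_right, mul_one, Finset.sum_apply, Finset.sum_pi_single]
    by_cases hj : f j = 0 <;> simp [hj]
  rw [hsum]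
  exact I.sum_mem fun i _ => I.mul_mem_left f (h i)

theorem ker_evalRingHom_le_of_single_one_notMem [DecidableEq ι] {Q : Ideal (∀ i, A i)}
    [Q.IsPrime] {i : ι} (hi : Pi.single i 1 ∉ Q) : RingHom.ker (Pi.evalRingHom A i) ≤ Q := by
  have hidem : IsIdempotentElem (Pi.single i (1 : A i)) := by
    rw [IsIdempotentElem, ← Pi.single_mul, mul_one]
  have hcompl : 1 - Pi.single i 1 ∈ Q :=
    (Ideal.IsPrime.mem_or_mem ‹_› (hidem.mul_one_sub_self ▸ Q.zero_mem)).resolve_left hi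
  intro f hf
  have hf' : f = f * (1 - Pi.single i 1) := by
    ext j
    rcases eq_or_ne j i with rfl | hj
    · simpa using hf
    · simp [hj]
  rw [hf']
  exact Q.mul_mem_left f hcompl

theorem finiteSupportIdeal_le_or_exists_ker_evalRingHom_le (Q : Ideal (∀ i, A i)) [Q.IsPrime] :
    finiteSupportIdeal A ≤ Q ∨ ∃ i, RingHom.ker (Pi.evalRingHom A i) ≤ Q := by
  classical
  by_cases h : ∀ i, Pi.single i 1 ∈ Q
  · exact .inl (finiteSupportIdeal_le_of_single_one_mem h)
  · obtain ⟨i, hi⟩ := not_forall.mp h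
    exact .inr ⟨i, ker_evalRingHom_le_of_single_one_notMem hi⟩

end Pi

section PiQuotient

variable {R ι : Type*} [CommRing R] (p : ι → Ideal R)

theorem comap_ker_evalRingHom_piQuotient (i : ι) :
    (RingHom.ker (Pi.evalRingHom (fun i => R ⧸ p i) i)).comap
      (RingHom.pi fun i => Ideal.Quotient.mk (p i)) = p i := by
  rw [RingHom.comap_ker]
  exact Ideal.mk_ker

theorem comap_piQuotient_eq_of_ker_evalRingHom_le {i : ι} (hp : (p i).IsMaximal)
    {Q : Ideal (∀ i, R ⧸ p i)} (hQ : Q ≠ ⊤)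
    (hle : RingHom.ker (Pi.evalRingHom (fun i => R ⧸ p i) i) ≤ Q) :
    Q.comap (RingHom.pi fun i => Ideal.Quotient.mk (p i)) = p i :=
  (hp.eq_of_le (Ideal.comap_ne_top _ hQ)
    ((comap_ker_evalRingHom_piQuotient p i).ge.trans (Ideal.comap_mono hle))).symm

theorem infinite_setOf_mem_of_mem_comap_piQuotient (hp : ∀ i, (p i).IsMaximal)
    {Q : Ideal (∀ i, R ⧸ p i)} (hQ : Q ≠ ⊤) (hD : Pi.finiteSupportIdeal _ ≤ Q) {x : R}
    (hx : x ∈ Q.comap (RingHom.pi fun i => Ideal.Quotient.mk (p i))) :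
    {i | x ∈ p i}.Infinite := by
  classical
  intro hfin
  let f : ∀ i, R ⧸ p i := fun i => if x ∈ p i then 1 else 0
  have hf : f ∈ Pi.finiteSupportIdeal _ := hfin.subset fun i hi => by
    by_contra h
    exact hi (if_neg h)
  have hunit : IsUnit (RingHom.pi (fun i => Ideal.Quotient.mk (p i)) x + f) := by
    refine Pi.isUnit_iff.mpr fun i => ?_
    by_cases h : x ∈ p i
    · simp [f, h, Ideal.Quotient.eq_zero_iff_mem.mpr h]
    · have := hp i
      have hx0 : Ideal.Quotient.mk (p i) x ≠ 0 := mt Ideal.Quotient.eq_zero_iff_mem.mp h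
      obtain ⟨y, hy⟩ := Ideal.Quotient.exists_inv hx0
      simpa [f, h] using IsUnit.of_mul_eq_one y hy
  exact hQ (Q.eq_top_of_isUnit_mem (Q.add_mem hx (hD hf)) hunit)

end PiQuotient

theorem IsDedekindDomain.finite_setOf_mem_of_ne_zero {R : Type*} [CommRing R]
    [IsDedekindDomain R] {x : R} (hx : x ≠ 0) : {q : PrimeSpectrum R | x ∈ q.asIdeal}.Finite := by
  refine ((Ideal.finite_factors (I := Ideal.span {x}) (by simpa using hx)).image
    fun v => (⟨v.asIdeal, v.isPrime⟩ : PrimeSpectrum R)).subset fun q hq => ?_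
  have hq0 : q.asIdeal ≠ ⊥ := fun h => hx (by simpa [h] using hq)
  exact ⟨⟨q.asIdeal, q.isPrime, hq0⟩, by simpa [Ideal.dvd_iff_le, Ideal.span_le] using hq, rfl⟩

theorem IsDedekindDomain.comap_piQuotient_eq_bot_of_finiteSupportIdeal_le {R : Type*} [CommRing R]
    [IsDedekindDomain R] {E : Set (PrimeSpectrum R)} (hmax : ∀ q ∈ E, q.asIdeal.IsMaximal)
    {Q : Ideal (∀ q : E, R ⧸ (q : PrimeSpectrum R).asIdeal)} (hQ : Q ≠ ⊤)
    (hD : Pi.finiteSupportIdeal _ ≤ Q) :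
    Q.comap (RingHom.pi fun q : E => Ideal.Quotient.mk (q : PrimeSpectrum R).asIdeal) = ⊥ := by
  refine eq_bot_iff.mpr fun x hx => (Submodule.mem_bot R).mpr ?_
  by_contra hx0
  exact infinite_setOf_mem_of_mem_comap_piQuotient _ (fun q : E => hmax q q.2) hQ hD hx
    ((finite_setOf_mem_of_ne_zero hx0).preimage Subtype.val_injective.injOn)

theorem stmt_12_general {R : Type*} [CommRing R] [IsDedekindDomain R]
    (E : Set (PrimeSpectrum R)) (hmax : ∀ p ∈ E, p.asIdeal.IsMaximal) (hInf : E.Infinite) :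
    Set.range
        (PrimeSpectrum.comap
          (Pi.ringHom fun p : E => Ideal.Quotient.mk (p : PrimeSpectrum R).asIdeal)) =
        insert ⟨⊥, Ideal.bot_prime⟩ E ∧
      ∀ P : Ideal (∀ p : E, R ⧸ (p : PrimeSpectrum R).asIdeal), P.IsPrime →
        (∀ f : ∀ p : E, R ⧸ (p : PrimeSpectrum R).asIdeal,
          {p | f p ≠ 0}.Finite → f ∈ P) →
        P.comap (Pi.ringHom fun p : E => Ideal.Quotient.mk (p : PrimeSpectrum R).asIdeal)
          = ⊥ := by
  set π := Pi.ringHom fun p : E => Ideal.Quotient.mk (p : PrimeSpectrum R).asIdeal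
  have hwild {Q : Ideal (∀ p : E, R ⧸ (p : PrimeSpectrum R).asIdeal)} (hQ : Q ≠ ⊤)
      (hD : Pi.finiteSupportIdeal _ ≤ Q) :
      Q.comap π = ⊥ :=
    IsDedekindDomain.comap_piQuotient_eq_bot_of_finiteSupportIdeal_le hmax hQ hD
  refine ⟨Set.Subset.antisymm ?_ ?_, fun P hP hD => hwild hP.ne_top fun f => hD f⟩
  · rintro _ ⟨Q, rfl⟩
    rcases Pi.finiteSupportIdeal_le_or_exists_ker_evalRingHom_le Q.asIdeal with hD | ⟨q, hq⟩
    · exact .inl (PrimeSpectrum.ext (hwild Q.isPrime.ne_top hD))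
    · have hcomap : PrimeSpectrum.comap π Q = q := PrimeSpectrum.ext <|
        comap_piQuotient_eq_of_ker_evalRingHom_le (fun p : E => (p : PrimeSpectrum R).asIdeal)
          (hmax q q.2) Q.isPrime.ne_top hq
      exact .inr (hcomap ▸ q.2)
  · rintro q (rfl | hq)
    · have := hInf.to_subtype
      have hne : Pi.finiteSupportIdeal (fun p : E => R ⧸ (p : PrimeSpectrum R).asIdeal) ≠ ⊤ :=
        Pi.finiteSupportIdeal_ne_top
      obtain ⟨M, hM, hDM⟩ := Ideal.exists_le_maximal _ hne
      exact ⟨⟨M, hM.isPrime⟩, PrimeSpectrum.ext (hwild (Q := M) hM.ne_top hDM)⟩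
    · let ev := Pi.evalRingHom (fun p : E => R ⧸ (p : PrimeSpectrum R).asIdeal) ⟨q, hq⟩
      refine ⟨⟨_, RingHom.ker_isPrime ev⟩, PrimeSpectrum.ext ?_⟩
      exact comap_ker_evalRingHom_piQuotient (fun p : E => (p : PrimeSpectrum R).asIdeal) ⟨q, hq⟩

/-- Let `R` be a Dedekind domain with torsion ideal class group and `E` an infinite set of
maximal ideals of `R`. Let `π : R → S = ∏_{𝔭∈E} R/𝔭` be the canonical map. Then
`Im π* = E ∪ {0}` and every prime of `S` containing the direct sum ideal `⊕_{𝔭∈E} R/𝔭`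
contracts to `0`. -/
theorem stmt_12 {R : Type*} [CommRing R] [IsDedekindDomain R]
    (htor : Monoid.IsTorsion (ClassGroup R))
    (E : Set (PrimeSpectrum R)) (hmax : ∀ p ∈ E, p.asIdeal.IsMaximal) (hInf : E.Infinite) :
    Set.range
        (PrimeSpectrum.comap
          (Pi.ringHom fun p : E => Ideal.Quotient.mk (p : PrimeSpectrum R).asIdeal)) =
        insert ⟨⊥, Ideal.bot_prime⟩ E ∧
      ∀ P : Ideal (∀ p : E, R ⧸ (p : PrimeSpectrum R).asIdeal), P.IsPrime →
        (∀ f : ∀ p : E, R ⧸ (p : PrimeSpectrum R).asIdeal,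
          {p | f p ≠ 0}.Finite → f ∈ P) →
        P.comap (Pi.ringHom fun p : E => Ideal.Quotient.mk (p : PrimeSpectrum R).asIdeal)
          = ⊥ :=
  stmt_12_general E hmax hInf
end

section
/- Let (R, 𝔪) be a reduced local ring of Krull dimension 1 satisfying infinite prime absorbance, and let E be an infinite set of minimal primes of R. Let π : R → S := ∏_{𝔭∈E} R_𝔭 be the canonical map. Then Im π* = E ∪ {𝔪}, and for every prime ideal P of S containing the direct sum ideal ⊕_{𝔭∈E} R_𝔭 one has π⁻¹(P) = 𝔪. -/
lemma aux_ker {R : Type*} [CommRing R] [IsReduced R] {p : PrimeSpectrum R}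
    (hp : p.asIdeal ∈ minimalPrimes R) (r : R) :
    algebraMap R (Localization.AtPrime p.asIdeal) r = 0 ↔ r ∈ p.asIdeal := by
  constructor
  · intro h
    obtain ⟨⟨s, hs⟩, hsr⟩ :=
      (IsLocalization.map_eq_zero_iff p.asIdeal.primeCompl (Localization.AtPrime p.asIdeal) r).mp h
    have hmem : s * r ∈ p.asIdeal := by
      simp only [Submonoid.mk_smul] at hsr
      rw [show s * r = 0 from hsr]
      exact p.asIdeal.zero_mem
    rcases p.isPrime.mem_or_mem hmem with h1 | h1
    · exact absurd h1 hs
    · exact h1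
  · intro hr
    have hmem : algebraMap R (Localization.AtPrime p.asIdeal) r ∈
        nilradical (Localization.AtPrime p.asIdeal) := by
      rw [nilradical_eq_sInf, Ideal.mem_sInf]
      intro Q hQ
      haveI : Q.IsPrime := hQ
      have hQle : Q ≤ IsLocalRing.maximalIdeal (Localization.AtPrime p.asIdeal) :=
        IsLocalRing.le_maximalIdeal hQ.ne_top
      have hle : Q.comap (algebraMap R (Localization.AtPrime p.asIdeal)) ≤ p.asIdeal := by
        calc Q.comap (algebraMap R (Localization.AtPrime p.asIdeal))
            ≤ (IsLocalRing.maximalIdeal (Localization.AtPrime p.asIdeal)).comap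
              (algebraMap R (Localization.AtPrime p.asIdeal)) := Ideal.comap_mono hQle
          _ = p.asIdeal := Localization.AtPrime.comap_maximalIdeal
      have : p.asIdeal ≤ Q.comap (algebraMap R (Localization.AtPrime p.asIdeal)) :=
        hp.2 ⟨Ideal.IsPrime.comap _, bot_le⟩ hle
      exact this hr
    rw [nilradical_eq_zero] at hmem; simpa using hmem

lemma aux_dim1 {R : Type*} [CommRing R] [IsLocalRing R] (hdim : ringKrullDim R = 1)
    {p q : Ideal R} (hp : p ∈ minimalPrimes R) (hq : q.IsPrime)
    (hlt : p < q) : q = IsLocalRing.maximalIdeal R := by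
  by_contra hne
  have hqle : q < IsLocalRing.maximalIdeal R :=
    lt_of_le_of_ne (IsLocalRing.le_maximalIdeal hq.ne_top) hne
  haveI hppr : p.IsPrime := hp.1.1
  let c : LTSeries (PrimeSpectrum R) :=
    { length := 2
      toFun := ![⟨p, hppr⟩, ⟨q, hq⟩,
        ⟨IsLocalRing.maximalIdeal R, (IsLocalRing.maximalIdeal.isMaximal R).isPrime⟩]
      step := by
        intro i
        fin_cases i
        · exact (PrimeSpectrum.asIdeal_lt_asIdeal _ _).mp hlt
        · exact (PrimeSpectrum.asIdeal_lt_asIdeal _ _).mp hqle }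
  have h2 := Order.LTSeries.length_le_krullDim c
  rw [show Order.krullDim (PrimeSpectrum R) = ringKrullDim R from rfl, hdim] at h2
  norm_num at h2

/-- Let `(R, 𝔪)` be a reduced local ring of Krull dimension `1` satisfying infinite prime
absorbance (a P.Z. ring), and `E` an infinite set of minimal primes of `R`. Let
`π : R → S = ∏_{𝔭∈E} R_𝔭` be the canonical map. Then `Im π* = E ∪ {𝔪}` and every prime
of `S` containing the direct sum ideal `⊕_{𝔭∈E} R_𝔭` contracts to `𝔪`. -/
theorem stmt_14 {R : Type*} [CommRing R] [IsLocalRing R] [IsReduced R]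
    (hdim : ringKrullDim R = 1)
    (hPZ : ∀ F : Set (Ideal R), (∀ q ∈ F, q.IsPrime) →
      ∀ 𝔭 : Ideal R, 𝔭.IsPrime → sInf F ≤ 𝔭 → ∃ q ∈ F, q ≤ 𝔭)
    (E : Set (PrimeSpectrum R)) (hmin : ∀ p ∈ E, p.asIdeal ∈ minimalPrimes R)
    (hInf : E.Infinite) :
    Set.range
        (PrimeSpectrum.comap
          (Pi.ringHom fun p : E =>
            algebraMap R (Localization.AtPrime (p : PrimeSpectrum R).asIdeal))) =
        insert ⟨IsLocalRing.maximalIdeal R,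
          (IsLocalRing.maximalIdeal.isMaximal R).isPrime⟩ E ∧
      ∀ P : Ideal (∀ p : E, Localization.AtPrime (p : PrimeSpectrum R).asIdeal), P.IsPrime →
        (∀ f : ∀ p : E, Localization.AtPrime (p : PrimeSpectrum R).asIdeal,
          {p | f p ≠ 0}.Finite → f ∈ P) →
        P.comap (Pi.ringHom fun p : E =>
            algebraMap R (Localization.AtPrime (p : PrimeSpectrum R).asIdeal)) =
          IsLocalRing.maximalIdeal R := by
  classical
  set π : R →+* ∀ p : E, Localization.AtPrime (p : PrimeSpectrum R).asIdeal :=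
    Pi.ringHom fun p : E =>
      algebraMap R (Localization.AtPrime (p : PrimeSpectrum R).asIdeal) with hπ
  have hker : ∀ (p : E) (r : R),
      algebraMap R (Localization.AtPrime (p : PrimeSpectrum R).asIdeal) r = 0 ↔
        r ∈ (p : PrimeSpectrum R).asIdeal := fun p r => aux_ker (hmin p p.2) r
  -- Part 2 : every prime containing the direct sum ideal contracts to `𝔪`.
  have key : ∀ P : Ideal (∀ p : E, Localization.AtPrime (p : PrimeSpectrum R).asIdeal),
      P.IsPrime →
      (∀ f : ∀ p : E, Localization.AtPrime (p : PrimeSpectrum R).asIdeal,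
        {p | f p ≠ 0}.Finite → f ∈ P) →
      P.comap π = IsLocalRing.maximalIdeal R := by
    intro P hP hfin
    haveI := hP
    have main : ∀ p₀ : PrimeSpectrum R, ∃ p₁, p₁ ∈ E ∧ p₁ ≠ p₀ ∧
        p₁.asIdeal ≤ P.comap π := by
      intro p₀
      have hsub : sInf (PrimeSpectrum.asIdeal '' (E \ {p₀})) ≤ P.comap π := by
        intro r hr
        rw [Ideal.mem_comap]
        apply hfin
        have hss : {p : E | π r p ≠ 0} ⊆ {p : E | (p : PrimeSpectrum R) = p₀} := by
          intro p hp
          by_contra hpp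
          apply hp
          exact (hker p r).mpr (Ideal.mem_sInf.mp hr ⟨p, ⟨p.2, hpp⟩, rfl⟩)
        exact Set.Finite.subset
          ((Set.subsingleton_of_forall_eq p₀ fun y hy => hy).finite.preimage
            (Set.injOn_of_injective Subtype.val_injective)) hss
      obtain ⟨q, hqmem, hqle⟩ := hPZ _
        (by rintro q ⟨p1, hp1, rfl⟩; exact (hmin p1 hp1.1).1.1)
        _ (Ideal.IsPrime.comap π) hsub
      obtain ⟨p₁, hp₁, rfl⟩ := hqmem
      exact ⟨p₁, hp₁.1, by simpa using hp₁.2, hqle⟩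
    obtain ⟨p₀, hp₀⟩ := hInf.nonempty
    obtain ⟨p₁, hp₁E, _, hle₁⟩ := main p₀
    obtain ⟨p₂, hp₂E, hne₂, hle₂⟩ := main p₁
    have hlt : p₁.asIdeal < P.comap π := by
      rcases lt_or_eq_of_le hle₁ with h | h
      · exact h
      · exfalso
        rw [← h] at hle₂
        have h12 : p₁.asIdeal ≤ p₂.asIdeal := (hmin p₁ hp₁E).2 ⟨p₂.isPrime, bot_le⟩ hle₂
        exact hne₂ (PrimeSpectrum.ext (le_antisymm hle₂ h12))
    exact aux_dim1 hdim (hmin p₁ hp₁E) (Ideal.IsPrime.comap π) hlt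
  refine ⟨Set.eq_of_subset_of_subset ?_ ?_, key⟩
  · -- range ⊆ E ∪ {𝔪}
    rintro x ⟨P, rfl⟩
    haveI : (P.asIdeal.comap π).IsPrime := Ideal.IsPrime.comap π
    have hsub : sInf (PrimeSpectrum.asIdeal '' E) ≤ P.asIdeal.comap π := by
      intro r hr
      rw [Ideal.mem_comap]
      have h0 : π r = 0 :=
        funext fun p => (hker p r).mpr (Ideal.mem_sInf.mp hr ⟨p, p.2, rfl⟩)
      rw [h0]; exact P.asIdeal.zero_mem
    obtain ⟨q, hqmem, hqle⟩ := hPZ _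
      (by rintro q ⟨p1, hp1, rfl⟩; exact (hmin p1 hp1).1.1)
      _ (Ideal.IsPrime.comap π) hsub
    obtain ⟨p, hpE, rfl⟩ := hqmem
    rcases lt_or_eq_of_le hqle with h | h
    · exact Set.mem_insert_iff.mpr (Or.inl (PrimeSpectrum.ext
        (by rw [PrimeSpectrum.comap_asIdeal]
            exact aux_dim1 hdim (hmin p hpE) (Ideal.IsPrime.comap π) h)))
    · refine Set.mem_insert_iff.mpr (Or.inr ?_)
      have hxp : PrimeSpectrum.comap π P = p :=
        PrimeSpectrum.ext (by rw [PrimeSpectrum.comap_asIdeal]; exact h.symm)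
      rw [hxp]; exact hpE
  · -- E ∪ {𝔪} ⊆ range
    rintro x hx
    rcases Set.mem_insert_iff.mp hx with rfl | hxE
    · -- the maximal ideal is in the image
      haveI : Infinite E := hInf.to_subtype
      let I : Ideal (∀ p : E, Localization.AtPrime (p : PrimeSpectrum R).asIdeal) :=
        { carrier := {f | {p | f p ≠ 0}.Finite}
          add_mem' := fun {f g} hf hg => (hf.union hg).subset fun p hp => by
            by_contra hc
            simp only [Set.mem_union, Set.mem_setOf_eq, not_or, not_not] at hc
            exact hp (by simp [Pi.add_apply, hc.1, hc.2])
          zero_mem' := by simp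
          smul_mem' := fun c f hf => hf.subset fun p hp => by
            by_contra h0
            simp only [Set.mem_setOf_eq, not_not] at h0
            exact hp (by simp [Pi.smul_apply, smul_eq_mul, h0]) }
      have hItop : I ≠ ⊤ := by
        intro h
        have h1 : (1 : ∀ p : E, Localization.AtPrime (p : PrimeSpectrum R).asIdeal) ∈ I :=
          h ▸ Submodule.mem_top
        have hfin : {p : E |
            (1 : ∀ p : E, Localization.AtPrime (p : PrimeSpectrum R).asIdeal) p ≠ 0}.Finite := h1
        have huniv : {p : E |
            (1 : ∀ p : E, Localization.AtPrime (p : PrimeSpectrum R).asIdeal) p ≠ 0} =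
            Set.univ := by
          ext p; simp [one_ne_zero]
        rw [huniv] at hfin
        exact Set.infinite_univ hfin
      obtain ⟨M, hM, hIM⟩ := Ideal.exists_le_maximal I hItop
      refine ⟨⟨M, hM.isPrime⟩, ?_⟩
      apply PrimeSpectrum.ext
      rw [PrimeSpectrum.comap_asIdeal]
      exact key M hM.isPrime fun f hf => hIM hf
    · -- every element of E is in the image
      refine ⟨⟨Ideal.comap
          (Pi.evalRingHom (fun p : E => Localization.AtPrime (p : PrimeSpectrum R).asIdeal)
            (⟨x, hxE⟩ : E))
          (IsLocalRing.maximalIdeal (Localization.AtPrime x.asIdeal)),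
        Ideal.IsPrime.comap _⟩, ?_⟩
      apply PrimeSpectrum.ext
      rw [PrimeSpectrum.comap_asIdeal, Ideal.comap_comap]
      have hcomp : (Pi.evalRingHom
          (fun p : E => Localization.AtPrime (p : PrimeSpectrum R).asIdeal)
          (⟨x, hxE⟩ : E)).comp π = algebraMap R (Localization.AtPrime x.asIdeal) :=
        RingHom.ext fun r => rfl
      rw [hcomp]
      exact Localization.AtPrime.comap_maximalIdeal
end

section
/- Let (R, 𝔪) be a reduced local ring of Krull dimension 1 satisfying infinite prime absorbance and E an infinite set of minimal primes of R. Let π : R → S := ∏_{𝔭∈E} R/𝔭 be the canonical map. Then Im π* equals the Zariski closure of E, which is E ∪ {𝔪}, and for every prime ideal P of S containing the direct sum ideal ⊕_{𝔭∈E} R/𝔭 one has π⁻¹(P) = 𝔪. -/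
/-!
Since `ker π` is the intersection of the primes in `E`, infinite prime absorbance shows that
every prime containing it contains some `𝔭 ∈ E`, so in dimension one it is `𝔭` itself or `𝔪`.
Absorbance applied to `E \ {𝔭}` also gives, for minimal `𝔭`, an `x` lying in every member of `E`
except `𝔭`; then `π x` is supported at `𝔭` alone. Hence if a prime `P` of `S` contains the direct
sum and `𝔭 ⊆ π⁻¹(P)`, then `x ∈ π⁻¹(P) \ 𝔭`, which forces `π⁻¹(P) = 𝔪`. As `E` is infinite the
direct sum is proper, and a maximal ideal containing it puts `𝔪` in the image of `π*`.
-/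

open PrimeSpectrum IsLocalRing

section FiniteSupport

variable {ι : Type*} (A : ι → Type*) [∀ i, Semiring (A i)]

def finiteSupportIdeal : Ideal (∀ i, A i) where
  carrier := {f | {i | f i ≠ 0}.Finite}
  zero_mem' := by simp
  add_mem' {f g} hf hg := (hf.union hg).subset fun i hi => by
    by_contra h
    simp only [Set.mem_union, Set.mem_ofPred_eq, not_or, not_not] at h
    exact hi (by simp [h.1, h.2])
  smul_mem' c f hf := hf.subset fun i hi h => hi (by simp [h])

variable {A}

theorem mem_finiteSupportIdeal {f : ∀ i, A i} :
    f ∈ finiteSupportIdeal A ↔ {i | f i ≠ 0}.Finite :=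
  Iff.rfl

theorem finiteSupportIdeal_ne_top [Infinite ι] [∀ i, Nontrivial (A i)] :
    finiteSupportIdeal A ≠ ⊤ := by
  rw [Ne, Ideal.eq_top_iff_one, mem_finiteSupportIdeal]
  simpa using Set.infinite_univ

end FiniteSupport

theorem IsLocalRing.eq_maximalIdeal_of_lt {R : Type*} [CommSemiring R] [IsLocalRing R]
    [Ring.KrullDimLE 1 R] {p q : Ideal R} (hp : p.IsPrime) (hq : q.IsPrime) (h : p < q) :
    q = maximalIdeal R := by
  rcases Ring.krullDimLE_one_iff.mp ‹_› q hq with hmin | hmax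
  · exact absurd (hmin.2 ⟨hp, bot_le⟩ h.le) h.not_ge
  · exact eq_maximalIdeal hmax

def HasInfinitePrimeAbsorbance (R : Type*) [CommSemiring R] : Prop :=
  ∀ F : Set (Ideal R), (∀ q ∈ F, q.IsPrime) →
    ∀ 𝔭 : Ideal R, 𝔭.IsPrime → sInf F ≤ 𝔭 → ∃ q ∈ F, q ≤ 𝔭

namespace HasInfinitePrimeAbsorbance

variable {R : Type*} [CommSemiring R]

theorem exists_le_of_vanishingIdeal_le (hR : HasInfinitePrimeAbsorbance R)
    {E : Set (PrimeSpectrum R)} {q : Ideal R} (hq : q.IsPrime) (h : vanishingIdeal E ≤ q) :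
    ∃ p ∈ E, p.asIdeal ≤ q := by
  obtain ⟨_, ⟨p, hp, rfl⟩, hpq⟩ :=
    hR (asIdeal '' E) (by rintro _ ⟨p, -, rfl⟩; exact p.isPrime) q hq (by rwa [sInf_image])
  exact ⟨p, hp, hpq⟩

theorem vanishingIdeal_not_le_of_notMem (hR : HasInfinitePrimeAbsorbance R)
    {F : Set (PrimeSpectrum R)} {p : PrimeSpectrum R} (hp : p.asIdeal ∈ minimalPrimes R)
    (hpF : p ∉ F) : ¬ vanishingIdeal F ≤ p.asIdeal := by
  intro h
  obtain ⟨q, hqF, hqp⟩ := hR.exists_le_of_vanishingIdeal_le p.isPrime h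
  exact hpF (PrimeSpectrum.ext (le_antisymm hqp (hp.2 ⟨q.isPrime, bot_le⟩ hqp)) ▸ hqF)

variable [IsLocalRing R] [Ring.KrullDimLE 1 R] {E : Set (PrimeSpectrum R)}

theorem mem_or_eq_closedPoint (hR : HasInfinitePrimeAbsorbance R) {x : PrimeSpectrum R}
    (hx : vanishingIdeal E ≤ x.asIdeal) : x ∈ E ∨ x = closedPoint R := by
  obtain ⟨p, hp, hpx⟩ := hR.exists_le_of_vanishingIdeal_le x.isPrime hx
  rcases hpx.eq_or_lt with h | h
  · exact .inl (PrimeSpectrum.ext h ▸ hp)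
  · exact .inr (PrimeSpectrum.ext (eq_maximalIdeal_of_lt p.isPrime x.isPrime h))

theorem closure_eq_insert_closedPoint (hR : HasInfinitePrimeAbsorbance R) (hE : E.Nonempty) :
    closure E = insert (closedPoint R) E := by
  refine subset_antisymm (fun x hx => ?_) (Set.insert_subset ?_ subset_closure)
  · rw [← zeroLocus_vanishingIdeal_eq_closure, mem_zeroLocus, SetLike.coe_subset_coe] at hx
    exact (hR.mem_or_eq_closedPoint hx).symm
  · obtain ⟨p, hp⟩ := hE
    exact closure_mono (Set.singleton_subset_iff.mpr hp)
      (specializes_iff_mem_closure.mp (specializes_closedPoint p))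

end HasInfinitePrimeAbsorbance

section PiQuotient

variable {R : Type*} [CommRing R] {E : Set (PrimeSpectrum R)}

variable (E) in
def piQuotient : R →+* ∀ p : E, R ⧸ (p : PrimeSpectrum R).asIdeal :=
  RingHom.pi fun _ => Ideal.Quotient.mk _

theorem ker_piQuotient : RingHom.ker (piQuotient E) = vanishingIdeal E := by
  rw [piQuotient, Ideal.ker_Pi_Quotient_mk, vanishingIdeal, iInf_subtype']

theorem vanishingIdeal_le_comap_piQuotient
    (P : Ideal (∀ p : E, R ⧸ (p : PrimeSpectrum R).asIdeal)) :
    vanishingIdeal E ≤ P.comap (piQuotient E) :=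
  ker_piQuotient (E := E) ▸ Ideal.ker_le_comap _

theorem mem_range_comap_piQuotient {p : PrimeSpectrum R} (hp : p ∈ E) :
    p ∈ Set.range (comap (piQuotient E)) := by
  have := p.isPrime
  refine ⟨comap (Pi.evalRingHom _ ⟨p, hp⟩) ⟨⊥, Ideal.isPrime_bot⟩, PrimeSpectrum.ext ?_⟩
  ext x
  simp [piQuotient, Ideal.Quotient.eq_zero_iff_mem]

theorem piQuotient_mem_finiteSupportIdeal {p : PrimeSpectrum R} {x : R}
    (hx : x ∈ vanishingIdeal (E \ {p})) : piQuotient E x ∈ finiteSupportIdeal _ := by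
  refine ((Set.finite_singleton p).preimage Subtype.val_injective.injOn).subset fun q hq => ?_
  by_contra hqp
  exact hq (Ideal.Quotient.eq_zero_iff_mem.mpr ((mem_vanishingIdeal _ x).mp hx q ⟨q.2, hqp⟩))

namespace HasInfinitePrimeAbsorbance

variable [IsLocalRing R] [Ring.KrullDimLE 1 R]

theorem comap_piQuotient_eq_maximalIdeal (hR : HasInfinitePrimeAbsorbance R)
    (hmin : ∀ p ∈ E, p.asIdeal ∈ minimalPrimes R)
    {P : Ideal (∀ p : E, R ⧸ (p : PrimeSpectrum R).asIdeal)} (hP : P.IsPrime)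
    (hfin : finiteSupportIdeal _ ≤ P) :
    P.comap (piQuotient E) = maximalIdeal R := by
  have hq : (P.comap (piQuotient E)).IsPrime := Ideal.comap_isPrime _ _
  obtain ⟨p, hp, hpq⟩ :=
    hR.exists_le_of_vanishingIdeal_le hq (vanishingIdeal_le_comap_piQuotient P)
  obtain ⟨x, hxE, hxp⟩ := SetLike.not_le_iff_exists.mp
    (hR.vanishingIdeal_not_le_of_notMem (hmin p hp) (F := E \ {p}) fun h => h.2 rfl)
  have hxq : x ∈ P.comap (piQuotient E) := hfin (piQuotient_mem_finiteSupportIdeal hxE)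
  exact eq_maximalIdeal_of_lt p.isPrime hq (hpq.lt_of_not_ge fun h => hxp (h hxq))

theorem range_comap_piQuotient (hR : HasInfinitePrimeAbsorbance R)
    (hmin : ∀ p ∈ E, p.asIdeal ∈ minimalPrimes R) (hE : E.Infinite) :
    Set.range (comap (piQuotient E)) = insert (closedPoint R) E := by
  refine subset_antisymm ?_ (Set.insert_subset ?_ fun p hp => mem_range_comap_piQuotient hp)
  · rintro _ ⟨P, rfl⟩
    exact (hR.mem_or_eq_closedPoint (vanishingIdeal_le_comap_piQuotient P.asIdeal)).symm
  · have := hE.to_subtype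
    have (p : E) : Nontrivial (R ⧸ (p : PrimeSpectrum R).asIdeal) :=
      Ideal.Quotient.nontrivial_iff.mpr p.1.isPrime.ne_top
    obtain ⟨M, hM, hle⟩ := Ideal.exists_le_maximal _
      (finiteSupportIdeal_ne_top (A := fun p : E => R ⧸ p.1.asIdeal))
    exact ⟨⟨M, hM.isPrime⟩,
      PrimeSpectrum.ext (hR.comap_piQuotient_eq_maximalIdeal hmin hM.isPrime hle)⟩

end HasInfinitePrimeAbsorbance

end PiQuotient

theorem stmt_15_general {R : Type*} [CommRing R] [IsLocalRing R]
    (hdim : ringKrullDim R = 1)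
    (hPZ : ∀ F : Set (Ideal R), (∀ q ∈ F, q.IsPrime) →
      ∀ 𝔭 : Ideal R, 𝔭.IsPrime → sInf F ≤ 𝔭 → ∃ q ∈ F, q ≤ 𝔭)
    (E : Set (PrimeSpectrum R)) (hmin : ∀ p ∈ E, p.asIdeal ∈ minimalPrimes R)
    (hInf : E.Infinite) :
    Set.range
        (PrimeSpectrum.comap
          (Pi.ringHom fun p : E => Ideal.Quotient.mk (p : PrimeSpectrum R).asIdeal)) =
        closure E ∧
      closure E =
        insert ⟨IsLocalRing.maximalIdeal R,
          (IsLocalRing.maximalIdeal.isMaximal R).isPrime⟩ E ∧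
      ∀ P : Ideal (∀ p : E, R ⧸ (p : PrimeSpectrum R).asIdeal), P.IsPrime →
        (∀ f : ∀ p : E, R ⧸ (p : PrimeSpectrum R).asIdeal,
          {p | f p ≠ 0}.Finite → f ∈ P) →
        P.comap (Pi.ringHom fun p : E => Ideal.Quotient.mk (p : PrimeSpectrum R).asIdeal) =
          IsLocalRing.maximalIdeal R := by
  have hR : HasInfinitePrimeAbsorbance R := hPZ
  have : Ring.KrullDimLE 1 R := Ring.krullDimLE_iff.mpr hdim.le
  have hclosure := hR.closure_eq_insert_closedPoint hInf.nonempty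
  exact ⟨(hR.range_comap_piQuotient hmin hInf).trans hclosure.symm, hclosure,
    fun P hP hfin => hR.comap_piQuotient_eq_maximalIdeal hmin hP hfin⟩

/-- Let `(R, 𝔪)` be a reduced local ring of Krull dimension `1` satisfying infinite prime
absorbance (a P.Z. ring), and `E` an infinite set of minimal primes of `R`. Let
`π : R → S = ∏_{𝔭∈E} R/𝔭` be the canonical map. Then `Im π*` equals the Zariski closure
of `E`, which is `E ∪ {𝔪}`, and every prime of `S` containing the direct sum ideal
`⊕_{𝔭∈E} R/𝔭` contracts to `𝔪`. -/
theorem stmt_15 {R : Type*} [CommRing R] [IsLocalRing R] [IsReduced R]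
    (hdim : ringKrullDim R = 1)
    (hPZ : ∀ F : Set (Ideal R), (∀ q ∈ F, q.IsPrime) →
      ∀ 𝔭 : Ideal R, 𝔭.IsPrime → sInf F ≤ 𝔭 → ∃ q ∈ F, q ≤ 𝔭)
    (E : Set (PrimeSpectrum R)) (hmin : ∀ p ∈ E, p.asIdeal ∈ minimalPrimes R)
    (hInf : E.Infinite) :
    Set.range
        (PrimeSpectrum.comap
          (Pi.ringHom fun p : E => Ideal.Quotient.mk (p : PrimeSpectrum R).asIdeal)) =
        closure E ∧
      closure E =
        insert ⟨IsLocalRing.maximalIdeal R,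
          (IsLocalRing.maximalIdeal.isMaximal R).isPrime⟩ E ∧
      ∀ P : Ideal (∀ p : E, R ⧸ (p : PrimeSpectrum R).asIdeal), P.IsPrime →
        (∀ f : ∀ p : E, R ⧸ (p : PrimeSpectrum R).asIdeal,
          {p | f p ≠ 0}.Finite → f ∈ P) →
        P.comap (Pi.ringHom fun p : E => Ideal.Quotient.mk (p : PrimeSpectrum R).asIdeal) =
          IsLocalRing.maximalIdeal R :=
  stmt_15_general hdim hPZ E hmin hInf
end

section
/- If (R, 𝔪) is a local ring of Krull dimension 1 satisfying infinite prime absorbance, then every infinite subset of Spec(R) is dense in the flat topology on Spec(R). -/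
open IsLocalRing PrimeSpectrum Set

def InfinitePrimeAbsorbance (R : Type*) [CommRing R] : Prop :=
  ∀ F : Set (Ideal R), (∀ q ∈ F, q.IsPrime) →
    ∀ 𝔭 : Ideal R, 𝔭.IsPrime → sInf F ≤ 𝔭 → ∃ q ∈ F, q ≤ 𝔭

theorem Set.Infinite.dense_of_cofinite_le {X : Type*} [t : TopologicalSpace X]
    (ht : TopologicalSpace.cofinite ≤ t) {E : Set X} (hE : E.Infinite) : Dense E := by
  refine dense_iff_inter_open.2 fun U hU hne => ?_
  obtain ⟨x, hxE, hxU⟩ := (hE.sdiff (ht U hU hne)).nonempty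
  exact ⟨x, not_not.1 hxU, hxE⟩

section

variable {R : Type*} [CommRing R]

namespace InfinitePrimeAbsorbance

theorem exists_notMem_forall_mem (hR : InfinitePrimeAbsorbance R)
    {F : Set (PrimeSpectrum R)} {p : PrimeSpectrum R} (hF : ∀ q ∈ F, ¬ q ≤ p) :
    ∃ c ∉ p.asIdeal, ∀ q ∈ F, c ∈ q.asIdeal := by
  by_contra! h
  have hle : sInf (asIdeal '' F) ≤ p.asIdeal := fun c hc => by
    by_contra hcp
    obtain ⟨q, hqF, hcq⟩ := h c hcp
    exact hcq (Ideal.mem_sInf.1 hc (mem_image_of_mem _ hqF))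
  obtain ⟨_, ⟨q, hqF, rfl⟩, hqp⟩ := hR _ (by rintro _ ⟨q, -, rfl⟩; exact q.2) _ p.2 hle
  exact hF q hqF hqp

theorem isOpen_singleton_of_isMin (hR : InfinitePrimeAbsorbance R) {p : PrimeSpectrum R}
    (hp : IsMin p) : IsOpen ({p} : Set (PrimeSpectrum R)) := by
  obtain ⟨c, hcp, hc⟩ := hR.exists_notMem_forall_mem (F := {p}ᶜ)
    fun q hq hqp => hq (hp.eq_of_le hqp)
  convert (basicOpen c).isOpen
  ext q
  by_cases hq : q = p
  · simp [hq, hcp]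
  · simp [hq, hc q hq]

end InfinitePrimeAbsorbance

theorem PrimeSpectrum.isMin_of_notMem [IsLocalRing R] [Ring.KrullDimLE 1 R] {a : R}
    (ha : a ∈ maximalIdeal R) {p : PrimeSpectrum R} (hp : a ∉ p.asIdeal) : IsMin p :=
  (Order.krullDim_le_one_iff.1 Order.KrullDimLE.krullDim_le p).resolve_right fun hmax =>
    hp (eq_maximalIdeal (isMax_iff.1 hmax) ▸ ha)

theorem InfinitePrimeAbsorbance.finite_basicOpen [IsLocalRing R] [Ring.KrullDimLE 1 R]
    (hR : InfinitePrimeAbsorbance R) {a : R} (ha : a ∈ maximalIdeal R) :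
    (basicOpen a : Set (PrimeSpectrum R)).Finite :=
  (isCompact_basicOpen a).finite <| isDiscrete_iff_forall_mem_exists_isOpen.2 fun p hp =>
    ⟨{p}, hR.isOpen_singleton_of_isMin (isMin_of_notMem ha hp),
      inter_eq_left.2 (singleton_subset_iff.2 hp)⟩

theorem InfinitePrimeAbsorbance.cofinite_le_flatTopology [IsLocalRing R] [Ring.KrullDimLE 1 R]
    (hR : InfinitePrimeAbsorbance R) : TopologicalSpace.cofinite ≤ flatTopology R := by
  refine le_generateFrom ?_
  rintro _ ⟨a, rfl⟩ ⟨p, hp⟩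
  have hap : a ∈ p.asIdeal := by simpa using hp
  rw [← basicOpen_eq_zeroLocus_compl]
  exact hR.finite_basicOpen (le_maximalIdeal p.2.ne_top hap)

end

/-- If `(R, 𝔪)` is a local ring of Krull dimension `1` satisfying infinite prime
absorbance (a P.Z. ring), then every infinite subset of `Spec R` is dense in the flat
topology on `Spec R`. -/
theorem stmt_16 {R : Type*} [CommRing R] [IsLocalRing R]
    (hdim : ringKrullDim R = 1)
    (hPZ : ∀ F : Set (Ideal R), (∀ q ∈ F, q.IsPrime) →
      ∀ 𝔭 : Ideal R, 𝔭.IsPrime → sInf F ≤ 𝔭 → ∃ q ∈ F, q ≤ 𝔭) :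
    ∀ E : Set (PrimeSpectrum R), E.Infinite → @Dense _ (flatTopology R) E := by
  have : Ring.KrullDimLE 1 R := ⟨hdim.le⟩
  intro E hE
  exact @Set.Infinite.dense_of_cofinite_le _ (flatTopology R)
    (InfinitePrimeAbsorbance.cofinite_le_flatTopology hPZ) E hE
end

section
/- Let K be a commutative ring, S a nonempty set, T = K[x_i : i ∈ S] the polynomial ring, I = (x_i x_k : i, k ∈ S, i ≠ k), and I_k = (x_i : i ∈ S, i ≠ k) for each k ∈ S. Then I = ⋂_{k∈S} I_k. In particular, K is reduced if and only if T/I is reduced. -/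
open MvPolynomial

section aux

set_option linter.unusedSectionVars false

variable {K : Type*} [CommRing K] {S : Type*} [DecidableEq S]

lemma aux_X_mul_X (i k : S) :
    (X i * X k : MvPolynomial S K) =
      monomial (Finsupp.single i 1 + Finsupp.single k 1) (1 : K) := by
  rw [X, X, monomial_mul, one_mul]

lemma aux_gen_eq :
    {f : MvPolynomial S K | ∃ i k : S, i ≠ k ∧ f = X i * X k} =
      (fun s => monomial s (1 : K)) ''
        {m : S →₀ ℕ | ∃ i k : S, i ≠ k ∧ m = Finsupp.single i 1 + Finsupp.single k 1} := by
  ext f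
  constructor
  · rintro ⟨i, k, hik, rfl⟩
    exact ⟨Finsupp.single i 1 + Finsupp.single k 1, ⟨i, k, hik, rfl⟩, (aux_X_mul_X i k).symm⟩

  · rintro ⟨m, ⟨i, k, hik, rfl⟩, rfl⟩
    exact ⟨i, k, hik, (aux_X_mul_X i k).symm⟩

lemma aux_single_sub (k : S) (d : ℕ) :
    Finsupp.single k d - Finsupp.single k 1 = Finsupp.single k (d - 1) := by
  exact (Finsupp.single_tsub).symm

/-- coefficient of the "kill all variables except k" evaluation -/
lemma aux_coeff_aeval (k : S) (f : MvPolynomial S K) (d : ℕ) :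
    (aeval (fun i => if i = k then (Polynomial.X : Polynomial K) else 0) f).coeff d =
      f.coeff (Finsupp.single k d) := by
  induction f using MvPolynomial.induction_on generalizing d with
  | C a =>
    simp [Polynomial.coeff_C, MvPolynomial.coeff_C, Finsupp.single_eq_zero, eq_comm]
  | add p q hp hq =>
    simp [hp, hq]
  | mul_X p i hp =>
    rw [map_mul, aeval_X]
    by_cases hik : i = k
    · subst hik
      rw [if_pos rfl, MvPolynomial.coeff_mul_X', aux_single_sub]
      cases d with
      | zero => simp
      | succ n =>
        rw [Polynomial.coeff_mul_X, hp]
        have : i ∈ (Finsupp.single i (n + 1)).support := by simp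
        rw [if_pos this]
        simp
    · rw [if_neg hik, mul_zero, Polynomial.coeff_zero, MvPolynomial.coeff_mul_X']
      have : i ∉ (Finsupp.single k d).support := by
        simp only [Finsupp.mem_support_iff, Finsupp.single_apply, ne_eq, not_not]
        rw [if_neg (fun h => hik h.symm)]
      rw [if_neg this]

lemma aux_mem_Ik_iff (k : S) (f : MvPolynomial S K) :
    f ∈ Ideal.span (MvPolynomial.X '' {i : S | i ≠ k}) ↔
      aeval (fun i => if i = k then (Polynomial.X : Polynomial K) else 0) f = 0 := by
  constructor
  · intro hf
    have hle : Ideal.span (MvPolynomial.X '' {i : S | i ≠ k}) ≤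
        RingHom.ker (aeval (fun i => if i = k then (Polynomial.X : Polynomial K) else 0)
          : MvPolynomial S K →ₐ[K] Polynomial K) := by
      rw [Ideal.span_le]
      rintro _ ⟨i, hi, rfl⟩
      simp only [SetLike.mem_coe, RingHom.mem_ker, AlgHom.toRingHom_eq_coe,
        RingHom.coe_coe, aeval_X]
      exact if_neg hi
    exact hle hf
  · intro hψ
    rw [mem_ideal_span_X_image]
    intro m hm
    by_contra h
    push_neg at h
    have hme : m = Finsupp.single k (m k) := by
      ext a
      rcases eq_or_ne a k with rfl | ha
      · simp
      · rw [Finsupp.single_apply, if_neg (fun hh => ha hh.symm)]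
        exact h a ha
    have := aux_coeff_aeval k f (m k)
    rw [hψ, Polynomial.coeff_zero, ← hme] at this
    exact (MvPolynomial.mem_support_iff.mp hm) this.symm

lemma aux_isReduced_poly (hK : IsReduced K) : IsReduced (Polynomial K) := by
  refine ⟨fun p hp => ?_⟩
  rw [Polynomial.isNilpotent_iff] at hp
  ext i
  simpa using (hp i).eq_zero

end aux

/-- Let `K` be a commutative ring, `S` a nonempty set, `T = K[xᵢ : i ∈ S]`,
`I = (xᵢxₖ : i ≠ k)` and `Iₖ = (xᵢ : i ≠ k)`. Then `I = ⋂_{k∈S} Iₖ`; in particular `K`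
is reduced if and only if `T/I` is reduced. -/
theorem stmt_17 (K : Type*) [CommRing K] (S : Type*) [Nonempty S] :
    Ideal.span {f : MvPolynomial S K | ∃ i k : S, i ≠ k ∧ f = X i * X k} =
        (⨅ k : S, Ideal.span (MvPolynomial.X '' {i : S | i ≠ k})) ∧
      (IsReduced K ↔
        IsReduced (MvPolynomial S K ⧸
          Ideal.span {f : MvPolynomial S K | ∃ i k : S, i ≠ k ∧ f = X i * X k})) := by
  classical
  have heq : Ideal.span {f : MvPolynomial S K | ∃ i k : S, i ≠ k ∧ f = X i * X k} =
      (⨅ k : S, Ideal.span (MvPolynomial.X '' {i : S | i ≠ k})) := by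
    ext f
    rw [aux_gen_eq, mem_ideal_span_monomial_image, Ideal.mem_iInf]
    constructor
    · intro hf l
      rw [mem_ideal_span_X_image]
      intro m hm
      obtain ⟨_, ⟨i, k, hik, rfl⟩, hle⟩ := hf m hm
      rcases eq_or_ne i l with rfl | hil
      · refine ⟨k, Ne.symm hik, fun h0 => ?_⟩
        have := hle k
        simp [Finsupp.single_apply, if_neg hik, h0] at this
      · refine ⟨i, hil, fun h0 => ?_⟩
        have := hle i
        simp [Finsupp.single_apply, if_neg (Ne.symm hik), h0] at this
    · intro hf m hm
      obtain ⟨l₀⟩ := ‹Nonempty S›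
      have h1 := (mem_ideal_span_X_image.mp (hf l₀)) m hm
      obtain ⟨i, _, hmi⟩ := h1
      obtain ⟨j, hji, hmj⟩ := (mem_ideal_span_X_image.mp (hf i)) m hm
      refine ⟨Finsupp.single j 1 + Finsupp.single i 1, ⟨j, i, hji, rfl⟩, ?_⟩
      intro a
      simp only [Finsupp.add_apply, Finsupp.single_apply]
      rcases eq_or_ne a j with rfl | haj
      · rw [if_pos rfl, if_neg (fun h => hji h.symm)]
        omega
      · rw [if_neg (fun h => haj h.symm)]
        rcases eq_or_ne a i with rfl | hai
        · rw [if_pos rfl]; omega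
        · rw [if_neg (fun h => hai h.symm)]; omega
  refine ⟨heq, ?_, ?_⟩
  · intro hK
    rw [← Ideal.isRadical_iff_quotient_reduced]
    intro x hx
    obtain ⟨n, hn⟩ := hx
    rw [heq, Ideal.mem_iInf] at hn ⊢
    intro k
    rw [aux_mem_Ik_iff]
    have hψ : (aeval (fun i => if i = k then (Polynomial.X : Polynomial K) else 0) x) ^ n = 0 := by
      rw [← map_pow]
      exact (aux_mem_Ik_iff k (x ^ n)).mp (hn k)
    have := aux_isReduced_poly hK
    exact IsNilpotent.eq_zero ⟨n, hψ⟩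
  · intro hred
    refine ⟨fun a ha => ?_⟩
    have hnil : IsNilpotent ((Ideal.Quotient.mk
        (Ideal.span {f : MvPolynomial S K | ∃ i k : S, i ≠ k ∧ f = X i * X k})) (C a)) :=
      ha.map ((Ideal.Quotient.mk _).comp (C : K →+* MvPolynomial S K))
    have h0 := hnil.eq_zero
    rw [Ideal.Quotient.eq_zero_iff_mem] at h0
    by_contra hane
    rw [aux_gen_eq, mem_ideal_span_monomial_image] at h0
    have h0mem : (0 : S →₀ ℕ) ∈ (C (σ := S) a).support := by
      rw [MvPolynomial.mem_support_iff]
      simpa using hane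
    obtain ⟨_, ⟨i, k, hik, rfl⟩, hle⟩ := h0 0 h0mem
    have := hle i
    simp [Finsupp.single_apply, if_neg (Ne.symm hik)] at this
end

section
/- Let K be a commutative ring, S a nonempty set, T = K[x_i : i ∈ S], I = (x_i x_k : i ≠ k), and I_k = (x_i : i ≠ k). Then K is an integral domain if and only if the set of minimal primes over I equals {I_k : k ∈ S}. -/
open MvPolynomial

section aux

variable {K : Type*} [CommRing K] {S : Type*}

noncomputable def phiAux [DecidableEq S] (k : S) : MvPolynomial S K →+* Polynomial K :=
  (aeval (fun i : S => if i = k then Polynomial.X else 0)).toRingHom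

noncomputable def psiAux (k : S) : Polynomial K →+* MvPolynomial S K :=
  (Polynomial.aeval (X k : MvPolynomial S K)).toRingHom

lemma ker_phiAux [DecidableEq S] (k : S) :
    RingHom.ker (phiAux (K := K) (S := S) k) =
      Ideal.span (MvPolynomial.X '' {i : S | i ≠ k}) := by
  apply le_antisymm
  · intro p hp
    have key : ∀ p : MvPolynomial S K,
        p - psiAux k (phiAux k p) ∈ Ideal.span (MvPolynomial.X '' {i : S | i ≠ k}) := by
      intro p
      induction p using MvPolynomial.induction_on with
      | C a =>
        simp [phiAux, psiAux]
      | add p q hp hq =>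
        have := Ideal.add_mem _ hp hq
        simpa [map_add, add_sub_add_comm] using this
      | mul_X p i hp =>
        by_cases hik : i = k
        · subst hik
          have h1 : phiAux (K := K) (S := S) i (X i) = Polynomial.X := by simp [phiAux]
          have h2 : psiAux (K := K) (S := S) i Polynomial.X = X i := by simp [psiAux]
          rw [map_mul, h1, map_mul, h2, ← sub_mul]
          exact Ideal.mul_mem_right _ _ hp
        · have h1 : phiAux (K := K) (S := S) k (X i) = 0 := by simp [phiAux, hik]
          rw [map_mul, h1, mul_zero, map_zero, sub_zero]
          exact Ideal.mul_mem_left _ _ (Ideal.subset_span ⟨i, hik, rfl⟩)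
    have := key p
    rwa [hp, map_zero, sub_zero] at this
  · rw [Ideal.span_le]
    rintro _ ⟨i, hi, rfl⟩
    have hi' : i ≠ k := hi
    simp [RingHom.mem_ker, phiAux, if_neg hi']

end aux

/-- Let `K` be a commutative ring, `S` a nonempty set, `T = K[xᵢ : i ∈ S]`,
`I = (xᵢxₖ : i ≠ k)` and `Iₖ = (xᵢ : i ≠ k)`. Then `K` is an integral domain if and only
if the set of minimal primes over `I` is exactly `{Iₖ : k ∈ S}`. -/
theorem stmt_18 (K : Type*) [CommRing K] (S : Type*) [Nonempty S] :
    IsDomain K ↔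
      Ideal.minimalPrimes
          (Ideal.span {f : MvPolynomial S K | ∃ i k : S, i ≠ k ∧ f = X i * X k}) =
        Set.range fun k : S => Ideal.span (MvPolynomial.X '' {i : S | i ≠ k}) := by
  classical
  set I : Ideal (MvPolynomial S K) :=
    Ideal.span {f : MvPolynomial S K | ∃ i k : S, i ≠ k ∧ f = X i * X k} with hI
  set Ik : S → Ideal (MvPolynomial S K) :=
    fun k => Ideal.span (MvPolynomial.X '' {i : S | i ≠ k}) with hIk
  have hle : ∀ k, I ≤ Ik k := by
    intro k
    rw [hI, Ideal.span_le]
    rintro _ ⟨i, j, hij, rfl⟩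
    by_cases hik : i = k
    · subst hik
      have hj : j ≠ i := fun h => hij h.symm
      exact Ideal.mul_mem_left _ _ (Ideal.subset_span ⟨j, hj, rfl⟩)
    · exact Ideal.mul_mem_right _ _ (Ideal.subset_span ⟨i, hik, rfl⟩)
  constructor
  · intro hK
    have hker : ∀ k, RingHom.ker (phiAux (K := K) (S := S) k) = Ik k := fun k => ker_phiAux k
    have hprime : ∀ k, (Ik k).IsPrime := by
      intro k
      rw [← hker k]
      exact RingHom.ker_isPrime _
    have hXnot : ∀ k, X k ∉ Ik k := by
      intro k hmem
      rw [← hker k, RingHom.mem_ker] at hmem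
      simp [phiAux] at hmem
    have hIkmem : ∀ k, Ik k ∈ I.minimalPrimes := by
      intro k
      refine ⟨⟨hprime k, hle k⟩, ?_⟩
      rintro Q ⟨hQ, hIQ⟩ hQle
      rw [hIk, Ideal.span_le]
      rintro _ ⟨i, hi, rfl⟩
      have hmul : X i * X k ∈ Q := hIQ (Ideal.subset_span ⟨i, k, hi, rfl⟩)
      rcases hQ.mem_or_mem hmul with h | h
      · exact h
      · exact absurd (hQle h) (hXnot k)
    ext P
    constructor
    · rintro ⟨⟨hP, hIP⟩, hmin⟩
      have : ∃ k : S, Ik k ≤ P := by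
        by_cases h : ∀ i : S, X i ∈ P
        · refine ⟨Classical.arbitrary S, ?_⟩
          rw [hIk, Ideal.span_le]
          rintro _ ⟨i, -, rfl⟩
          exact h i
        · push_neg at h
          obtain ⟨k, hk⟩ := h
          refine ⟨k, ?_⟩
          rw [hIk, Ideal.span_le]
          rintro _ ⟨i, hi, rfl⟩
          have hmul : X i * X k ∈ P := hIP (Ideal.subset_span ⟨i, k, hi, rfl⟩)
          rcases hP.mem_or_mem hmul with h' | h'
          · exact h'
          · exact absurd h' hk
      obtain ⟨k, hkP⟩ := this
      exact ⟨k, le_antisymm hkP (hmin ⟨hprime k, hle k⟩ hkP)⟩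
    · rintro ⟨k, rfl⟩
      exact hIkmem k
  · intro h
    obtain ⟨k, hk⟩ : ∃ k : S, Ik k ∈ I.minimalPrimes := by
      refine ⟨Classical.arbitrary S, ?_⟩
      rw [h]
      exact ⟨Classical.arbitrary S, rfl⟩
    have hprime : (Ik k).IsPrime := hk.1.1
    haveI := hprime
    haveI : IsDomain (MvPolynomial S K ⧸ Ik k) := Ideal.Quotient.isDomain _
    have hinj : Function.Injective ((Ideal.Quotient.mk (Ik k)).comp (C : K →+* MvPolynomial S K)) := by
      rw [RingHom.injective_iff_ker_eq_bot, eq_bot_iff]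
      intro a ha
      rw [RingHom.mem_ker, RingHom.comp_apply, Ideal.Quotient.eq_zero_iff_mem] at ha
      have hcc : Ik k ≤ RingHom.ker (constantCoeff : MvPolynomial S K →+* K) := by
        rw [hIk, Ideal.span_le]
        rintro _ ⟨i, -, rfl⟩
        simp [RingHom.mem_ker]
      have := hcc ha
      rw [RingHom.mem_ker, constantCoeff_C] at this
      simpa using this
    exact Function.Injective.isDomain ((Ideal.Quotient.mk (Ik k)).comp (C : K →+* MvPolynomial S K)) hinj
end

section
/- Let K be a field, S an infinite set, T = K[x_i : i ∈ S], I = (x_i x_k : i ≠ k), 𝔪 = (x_i : i ∈ S), and R the localization of T/I at the maximal ideal 𝔪/I. Then R is a reduced local ring of Krull dimension 1 with infinitely many minimal primes, and R satisfies infinite prime absorbance: if a prime P of R contains an intersection ⋂_{k∈S'} P_k of a family of primes of R, then P contains some P_k. -/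
/-!
The primes of `T/I` inside `𝔪/I` are `𝔪/I` and the images of the axis ideals
`I_k = ker (T → K[y], x_k ↦ y, x_i ↦ 0)`: a prime `q ⊇ I` omitting `x_k` contains `I_k`,
and its image in `K[y]` is a prime inside `(y)` omitting `y`, hence zero. As `I = ⋂ I_k`,
`T/I` is reduced. In `R` the primes are therefore the maximal ideal and the pairwise
incomparable `P_k`, and `x_k` lies in `P_j` exactly when `j ≠ k`. If `P_k ⊇ ⋂ F` with
`P_k ∉ F`, then `x_k` lies in every member of `F`, hence in `P_k`, which is absurd.
-/

open MvPolynomial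

variable (K S : Type*) [Field K]

/-- The ideal `I = (xᵢxₖ : i, k ∈ S, i ≠ k)` of `T = K[xᵢ : i ∈ S]`. -/
noncomputable def prodXIdeal : Ideal (MvPolynomial S K) :=
  Ideal.span {f | ∃ i k : S, i ≠ k ∧ f = X i * X k}

/-- The ideal `𝔪 = (xᵢ : i ∈ S)` of `T`. -/
noncomputable def mxIdeal : Ideal (MvPolynomial S K) :=
  Ideal.span (Set.range X)

lemma mem_mxIdeal_iff (x : MvPolynomial S K) :
    x ∈ mxIdeal K S ↔ constantCoeff x = 0 := by
  rw [mxIdeal, ← Set.image_univ, mem_ideal_span_X_image, constantCoeff_eq]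
  constructor
  · intro h
    by_contra hc
    obtain ⟨i, -, hi⟩ := h 0 (mem_support_iff.mpr hc)
    simp at hi
  · intro h m hm
    by_contra hc
    push_neg at hc
    have hm0 : m = 0 := Finsupp.ext fun i => by simpa using hc i (Set.mem_univ i)
    rw [hm0] at hm
    exact mem_support_iff.mp hm h

lemma mxIdeal_eq_ker :
    mxIdeal K S = RingHom.ker (constantCoeff : MvPolynomial S K →+* K) := by
  ext x; exact mem_mxIdeal_iff K S x

lemma mxIdeal_isPrime : (mxIdeal K S).IsPrime := by
  rw [mxIdeal_eq_ker]
  exact RingHom.ker_isPrime _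

lemma prodXIdeal_le_mxIdeal : prodXIdeal K S ≤ mxIdeal K S := by
  rw [prodXIdeal]
  refine Ideal.span_le.mpr ?_
  rintro f ⟨i, k, -, rfl⟩
  exact Ideal.mul_mem_right _ _ (Ideal.subset_span ⟨i, rfl⟩)

/-- The maximal ideal `𝔪/I` of `T/I`. -/
noncomputable def mxBar : Ideal (MvPolynomial S K ⧸ prodXIdeal K S) :=
  (mxIdeal K S).map (Ideal.Quotient.mk (prodXIdeal K S))

instance mxBar_isPrime : (mxBar K S).IsPrime := by
  haveI := mxIdeal_isPrime K S
  exact Ideal.map_isPrime_of_surjective Ideal.Quotient.mk_surjective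
    (by rw [Ideal.mk_ker]; exact prodXIdeal_le_mxIdeal K S)

theorem Polynomial.eq_bot_of_le_span_X_of_X_notMem {R : Type*} [CommRing R]
    {p : Ideal (Polynomial R)} [hp : p.IsPrime] (hle : p ≤ Ideal.span {Polynomial.X})
    (hX : Polynomial.X ∉ p) : p = ⊥ := by
  refine (Submodule.eq_bot_iff p).mpr fun g hg => ?_
  by_contra hg0
  obtain ⟨u, hgu, hu⟩ := g.exists_eq_pow_rootMultiplicity_mul_and_not_dvd hg0 0
  rw [map_zero, sub_zero] at hgu hu
  rw [hgu] at hg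
  have hXn : Polynomial.X ^ g.rootMultiplicity 0 ∉ p := fun h => hX (hp.mem_of_pow_mem _ h)
  exact hu (Ideal.mem_span_singleton.mp (hle ((hp.mul_mem_left_iff hXn).mp hg)))

theorem Finsupp.single_add_single_le {α : Type*} {i j : α} (hij : i ≠ j) {m : α →₀ ℕ}
    (hi : m i ≠ 0) (hj : m j ≠ 0) : single i 1 + single j 1 ≤ m := by
  classical
  intro l
  simp only [add_apply, single_apply]
  split_ifs <;> subst_vars <;> first | exact absurd rfl hij | omega

section Axes

variable {K S}

open Classical in
noncomputable def toAxis (k : S) : MvPolynomial S K →ₐ[K] Polynomial K :=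
  aeval (Pi.single k Polynomial.X)

noncomputable def axisIdeal (k : S) : Ideal (MvPolynomial S K) :=
  Ideal.span (X '' {i | i ≠ k})

@[simp]
lemma toAxis_X_self (k : S) : toAxis k (X k : MvPolynomial S K) = Polynomial.X := by
  simp [toAxis]

@[simp]
lemma toAxis_X_of_ne {i k : S} (h : i ≠ k) : toAxis k (X i : MvPolynomial S K) = 0 := by
  simp [toAxis, h]

lemma toAxis_aeval_X (k : S) (g : Polynomial K) :
    toAxis k (Polynomial.aeval (X k : MvPolynomial S K) g) = g := by
  rw [← Polynomial.aeval_algHom_apply, toAxis_X_self, Polynomial.aeval_X_left_apply]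

lemma toAxis_surjective (k : S) : Function.Surjective (toAxis k : MvPolynomial S K → _) :=
  fun g => ⟨_, toAxis_aeval_X k g⟩

lemma coeff_zero_toAxis (k : S) (f : MvPolynomial S K) :
    (toAxis k f).coeff 0 = constantCoeff f := by
  change (Polynomial.constantCoeff.comp (toAxis k).toRingHom) f = constantCoeff f
  congr 1
  refine MvPolynomial.ringHom_ext (fun r => by simp [toAxis]) fun i => ?_
  rcases eq_or_ne i k with rfl | h
  · simp
  · simp [h]

lemma X_mem_axisIdeal {i k : S} (h : i ≠ k) : (X i : MvPolynomial S K) ∈ axisIdeal k :=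
  Ideal.subset_span ⟨i, h, rfl⟩

lemma ker_toAxis (k : S) : RingHom.ker (toAxis k : MvPolynomial S K →ₐ[K] _) = axisIdeal k := by
  refine le_antisymm (fun f hf => ?_) (Ideal.span_le.mpr ?_)
  · have hsection : (Ideal.Quotient.mkₐ K (axisIdeal k)).comp
        ((Polynomial.aeval (X k)).comp (toAxis k)) = Ideal.Quotient.mkₐ K (axisIdeal k) := by
      refine MvPolynomial.algHom_ext fun i => ?_
      rcases eq_or_ne i k with rfl | h
      · simp
      · simp only [AlgHom.comp_apply, toAxis_X_of_ne h, map_zero, Ideal.Quotient.mkₐ_eq_mk]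
        exact ((Ideal.Quotient.eq_zero_iff_mem).mpr (X_mem_axisIdeal h)).symm
    have := DFunLike.congr_fun hsection f
    rw [AlgHom.comp_apply, AlgHom.comp_apply, RingHom.mem_ker.mp hf, map_zero, map_zero,
      Ideal.Quotient.mkₐ_eq_mk] at this
    exact (Ideal.Quotient.eq_zero_iff_mem).mp this.symm
  · rintro _ ⟨i, hi, rfl⟩
    exact toAxis_X_of_ne hi

instance axisIdeal_isPrime (k : S) : (axisIdeal k : Ideal (MvPolynomial S K)).IsPrime := by
  rw [← ker_toAxis]
  exact RingHom.ker_isPrime _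

lemma X_notMem_axisIdeal (k : S) : (X k : MvPolynomial S K) ∉ axisIdeal k := by
  rw [← ker_toAxis, RingHom.mem_ker, toAxis_X_self]
  exact Polynomial.X_ne_zero

lemma prodXIdeal_le_axisIdeal (k : S) : prodXIdeal K S ≤ axisIdeal k := by
  refine Ideal.span_le.mpr ?_
  rintro _ ⟨i, j, hij, rfl⟩
  rcases eq_or_ne i k with rfl | hi
  · exact Ideal.mul_mem_left _ _ (X_mem_axisIdeal hij.symm)
  · exact Ideal.mul_mem_right _ _ (X_mem_axisIdeal hi)

lemma axisIdeal_le_mxIdeal (k : S) : axisIdeal k ≤ mxIdeal K S :=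
  Ideal.span_mono (Set.image_subset_range _ _)

lemma axisIdeal_le_of_X_notMem {k : S} {q : Ideal (MvPolynomial S K)} [hq : q.IsPrime]
    (hI : prodXIdeal K S ≤ q) (hk : X k ∉ q) : axisIdeal k ≤ q := by
  refine Ideal.span_le.mpr ?_
  rintro _ ⟨i, hi, rfl⟩
  exact (hq.mem_or_mem (hI (Ideal.subset_span ⟨i, k, hi, rfl⟩))).resolve_right hk

theorem eq_axisIdeal_of_X_notMem {k : S} {q : Ideal (MvPolynomial S K)} [q.IsPrime]
    (hI : prodXIdeal K S ≤ q) (hm : q ≤ mxIdeal K S) (hk : X k ∉ q) : q = axisIdeal k := by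
  have hsurj := toAxis_surjective (K := K) k
  have hq : q = (q.map (toAxis k)).comap (toAxis k) := by
    rw [Ideal.comap_map_of_surjective' _ hsurj, ker_toAxis,
      sup_eq_left.mpr (axisIdeal_le_of_X_notMem hI hk)]
  have : (q.map (toAxis k)).IsPrime :=
    Ideal.map_isPrime_of_surjective hsurj
      (by rw [ker_toAxis]; exact axisIdeal_le_of_X_notMem hI hk)
  have hbot : q.map (toAxis k) = ⊥ := by
    refine Polynomial.eq_bot_of_le_span_X_of_X_notMem (fun g hg => ?_) fun hX => hk ?_
    · obtain ⟨f, hf, rfl⟩ := (Ideal.mem_map_iff_of_surjective _ hsurj).mp hg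
      rw [Ideal.mem_span_singleton, Polynomial.X_dvd_iff, coeff_zero_toAxis,
        ← mem_mxIdeal_iff]
      exact hm hf
    · rw [hq, Ideal.mem_comap, toAxis_X_self]
      exact hX
  rw [hq, hbot, ← RingHom.ker_eq_comap_bot, ker_toAxis]

lemma prodXIdeal_eq_span_monomial :
    prodXIdeal K S = Ideal.span ((fun m => monomial m (1 : K)) ''
      {m | ∃ i j : S, i ≠ j ∧ m = Finsupp.single i 1 + Finsupp.single j 1}) := by
  rw [prodXIdeal]
  congr 1
  ext f
  simp [X, monomial_mul, eq_comm]

theorem prodXIdeal_eq_iInf_axisIdeal [Nonempty S] : prodXIdeal K S = ⨅ k : S, axisIdeal k := by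
  refine le_antisymm (le_iInf prodXIdeal_le_axisIdeal) fun f hf => ?_
  have hmem (k : S) := (mem_ideal_span_X_image (x := f)).mp (Ideal.mem_iInf.mp hf k)
  rw [prodXIdeal_eq_span_monomial, mem_ideal_span_monomial_image]
  intro m hm
  obtain ⟨i, hi, hmi⟩ := hmem (Classical.arbitrary S) m hm
  obtain ⟨j, hji, hmj⟩ := hmem i m hm
  exact ⟨_, ⟨i, j, hji.symm, rfl⟩, Finsupp.single_add_single_le hji.symm hmi hmj⟩

lemma isReduced_quotient_prodXIdeal [Nonempty S] :
    IsReduced (MvPolynomial S K ⧸ prodXIdeal K S) := by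
  rw [← Ideal.isRadical_iff_quotient_reduced, prodXIdeal_eq_iInf_axisIdeal]
  exact Ideal.isRadical_iInf _ fun k => (axisIdeal_isPrime k).isRadical

end Axes

section Localization

variable {K S}

local notation "𝓡" => Localization.AtPrime (mxBar K S)
local notation "π" => algebraMap (MvPolynomial S K) 𝓡

open IsLocalRing

lemma algebraMap_eq_comp_mk :
    π = (algebraMap (MvPolynomial S K ⧸ prodXIdeal K S) 𝓡).comp (Ideal.Quotient.mk _) := by
  rw [IsScalarTower.algebraMap_eq _ (MvPolynomial S K ⧸ prodXIdeal K S),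
    Ideal.Quotient.algebraMap_eq]

lemma map_comap_algebraMap (P : Ideal 𝓡) : (P.comap π).map π = P := by
  rw [algebraMap_eq_comp_mk, ← Ideal.comap_comap, ← Ideal.map_map,
    Ideal.map_comap_of_surjective _ Ideal.Quotient.mk_surjective,
    IsLocalization.map_under (mxBar K S).primeCompl]

theorem isPrime_map_algebraMap_and_comap {q : Ideal (MvPolynomial S K)} [q.IsPrime]
    (hI : prodXIdeal K S ≤ q) (hm : q ≤ mxIdeal K S) :
    (q.map π).IsPrime ∧ (q.map π).comap π = q := by
  have : (q.map (Ideal.Quotient.mk (prodXIdeal K S))).IsPrime :=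
    Ideal.map_isPrime_of_surjective Ideal.Quotient.mk_surjective (by rwa [Ideal.mk_ker])
  have hdisj : Disjoint ((mxBar K S).primeCompl : Set (MvPolynomial S K ⧸ prodXIdeal K S))
      (q.map (Ideal.Quotient.mk (prodXIdeal K S))) :=
    Set.disjoint_left.mpr fun _ hx hq => hx (Ideal.map_mono hm hq)
  rw [algebraMap_eq_comp_mk, ← Ideal.map_map, ← Ideal.comap_comap,
    ← Ideal.under_def, IsLocalization.under_map_of_isPrime_disjoint _ _ this hdisj,
    Ideal.comap_map_mk hI]
  exact ⟨IsLocalization.isPrime_of_isPrime_disjoint _ _ _ this hdisj, rfl⟩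

lemma maximalIdeal_eq_map_mxIdeal : maximalIdeal 𝓡 = (mxIdeal K S).map π := by
  rw [algebraMap_eq_comp_mk, ← Ideal.map_map]
  exact Localization.AtPrime.map_eq_maximalIdeal.symm

lemma prodXIdeal_le_comap (P : Ideal 𝓡) : prodXIdeal K S ≤ P.comap π := fun x hx => by
  rw [Ideal.mem_comap, algebraMap_eq_comp_mk, RingHom.comp_apply,
    Ideal.Quotient.eq_zero_iff_mem.mpr hx, map_zero]
  exact P.zero_mem

lemma comap_maximalIdeal : (maximalIdeal 𝓡).comap π = mxIdeal K S := by
  have := mxIdeal_isPrime K S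
  rw [maximalIdeal_eq_map_mxIdeal]
  exact (isPrime_map_algebraMap_and_comap (prodXIdeal_le_mxIdeal K S) le_rfl).2

lemma comap_le_mxIdeal {P : Ideal 𝓡} (hP : P.IsPrime) : P.comap π ≤ mxIdeal K S :=
  comap_maximalIdeal (K := K) ▸ Ideal.comap_mono (le_maximalIdeal hP.ne_top)

noncomputable def axisPrime (k : S) : Ideal 𝓡 := (axisIdeal k).map π

instance axisPrime_isPrime (k : S) : (axisPrime k : Ideal 𝓡).IsPrime :=
  (isPrime_map_algebraMap_and_comap (prodXIdeal_le_axisIdeal k) (axisIdeal_le_mxIdeal k)).1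

lemma comap_axisPrime (k : S) : (axisPrime k : Ideal 𝓡).comap π = axisIdeal k :=
  (isPrime_map_algebraMap_and_comap (prodXIdeal_le_axisIdeal k) (axisIdeal_le_mxIdeal k)).2

lemma algebraMap_X_mem_axisPrime {i k : S} (h : i ≠ k) : π (X i) ∈ (axisPrime k : Ideal 𝓡) :=
  Ideal.mem_map_of_mem _ (X_mem_axisIdeal h)

lemma algebraMap_X_notMem_axisPrime (k : S) : π (X k) ∉ (axisPrime k : Ideal 𝓡) := by
  rw [← Ideal.mem_comap, comap_axisPrime]
  exact X_notMem_axisIdeal k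

lemma algebraMap_X_mem_maximalIdeal (k : S) : π (X k) ∈ maximalIdeal 𝓡 := by
  rw [maximalIdeal_eq_map_mxIdeal]
  exact Ideal.mem_map_of_mem _ (Ideal.subset_span ⟨k, rfl⟩)

theorem eq_maximalIdeal_or_eq_axisPrime {P : Ideal 𝓡} (hP : P.IsPrime) :
    P = maximalIdeal 𝓡 ∨ ∃ k, P = axisPrime k := by
  by_cases h : ∀ i, X i ∈ P.comap π
  · refine Or.inl ?_
    have : P.comap π = mxIdeal K S :=
      le_antisymm (comap_le_mxIdeal hP) (Ideal.span_le.mpr (Set.range_subset_iff.mpr h))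
    rw [← map_comap_algebraMap P, this, maximalIdeal_eq_map_mxIdeal]
  · push Not at h
    obtain ⟨k, hk⟩ := h
    refine Or.inr ⟨k, ?_⟩
    rw [← map_comap_algebraMap P,
      eq_axisIdeal_of_X_notMem (prodXIdeal_le_comap P) (comap_le_mxIdeal hP) hk, axisPrime]

lemma axisPrime_le_axisPrime_iff {j k : S} :
    (axisPrime j : Ideal 𝓡) ≤ axisPrime k ↔ j = k := by
  refine ⟨fun h => ?_, fun h => h ▸ le_rfl⟩
  by_contra hjk
  exact algebraMap_X_notMem_axisPrime k (h (algebraMap_X_mem_axisPrime (Ne.symm hjk)))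

lemma axisPrime_lt_maximalIdeal (k : S) : (axisPrime k : Ideal 𝓡) < maximalIdeal 𝓡 :=
  lt_of_le_not_ge (le_maximalIdeal (axisPrime_isPrime k).ne_top) fun h =>
    algebraMap_X_notMem_axisPrime k (h (algebraMap_X_mem_maximalIdeal k))

lemma axisPrime_mem_minimalPrimes (k : S) : (axisPrime k : Ideal 𝓡) ∈ minimalPrimes 𝓡 := by
  rw [minimalPrimes_eq_minimals]
  refine ⟨axisPrime_isPrime k, fun P hP hle => ?_⟩
  rcases eq_maximalIdeal_or_eq_axisPrime hP with rfl | ⟨j, rfl⟩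
  · exact absurd hle (axisPrime_lt_maximalIdeal k).not_ge
  · exact (axisPrime_le_axisPrime_iff.mp hle) ▸ le_rfl

theorem exists_le_of_sInf_le {F : Set (Ideal 𝓡)} (hF : ∀ q ∈ F, q.IsPrime) {P : Ideal 𝓡}
    (hP : P.IsPrime) (hle : sInf F ≤ P) : ∃ q ∈ F, q ≤ P := by
  rcases eq_maximalIdeal_or_eq_axisPrime hP with rfl | ⟨k, rfl⟩
  · obtain ⟨q, hq⟩ := F.eq_empty_or_nonempty.resolve_left fun h =>
      hP.ne_top (top_le_iff.mp (by rwa [h, sInf_empty] at hle))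
    exact ⟨q, hq, le_maximalIdeal (hF q hq).ne_top⟩
  · by_contra! hcon
    refine algebraMap_X_notMem_axisPrime k (hle (Ideal.mem_sInf.mpr fun q hq => ?_))
    rcases eq_maximalIdeal_or_eq_axisPrime (hF q hq) with rfl | ⟨j, rfl⟩
    · exact algebraMap_X_mem_maximalIdeal k
    · exact algebraMap_X_mem_axisPrime fun hkj => hcon _ hq (hkj ▸ le_rfl)

theorem ringKrullDim_eq_one [Nonempty S] : ringKrullDim 𝓡 = 1 := by
  have : Ring.KrullDimLE 1 𝓡 := .mk₁ fun P hP => by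
    rcases eq_maximalIdeal_or_eq_axisPrime hP with rfl | ⟨k, rfl⟩
    · exact Or.inr (maximalIdeal.isMaximal 𝓡)
    · exact Or.inl (axisPrime_mem_minimalPrimes k)
  refine le_antisymm (by exact_mod_cast Ring.krullDimLE_iff.mp this) ?_
  let k := Classical.arbitrary S
  exact Order.one_le_krullDim_iff.mpr
    ⟨⟨axisPrime k, inferInstance⟩, ⟨maximalIdeal 𝓡, inferInstance⟩, axisPrime_lt_maximalIdeal k⟩

end Localization

/-- Let `K` be a field, `S` an infinite set, `T = K[xᵢ : i ∈ S]`, `I = (xᵢxₖ : i ≠ k)`,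
`𝔪 = (xᵢ : i ∈ S)`, and `R` the localization of `T/I` at the maximal ideal `𝔪/I`.
Then `R` is a reduced local ring of Krull dimension `1` with infinitely many minimal
primes, satisfying infinite prime absorbance: every prime of `R` containing an
intersection of a family of primes of `R` contains a member of the family. -/
theorem stmt_19 [Infinite S] :
    IsReduced (Localization.AtPrime (mxBar K S)) ∧
      IsLocalRing (Localization.AtPrime (mxBar K S)) ∧
      ringKrullDim (Localization.AtPrime (mxBar K S)) = 1 ∧
      (minimalPrimes (Localization.AtPrime (mxBar K S))).Infinite ∧
      ∀ F : Set (Ideal (Localization.AtPrime (mxBar K S))), (∀ q ∈ F, q.IsPrime) →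
        ∀ P : Ideal (Localization.AtPrime (mxBar K S)), P.IsPrime →
          sInf F ≤ P → ∃ q ∈ F, q ≤ P := by
  have : IsReduced (MvPolynomial S K ⧸ prodXIdeal K S) := isReduced_quotient_prodXIdeal
  refine ⟨inferInstance, inferInstance, ringKrullDim_eq_one, ?_,
    fun F hF P hP => exists_le_of_sInf_le hF hP⟩
  exact Set.infinite_of_injective_forall_mem
    (fun j k h => axisPrime_le_axisPrime_iff.mp h.le) axisPrime_mem_minimalPrimes
end
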